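/- arXiv:2507.03439 — 11 statements merged into one kernel-verified Lean document; each statement's English description precedes it below -/
import Mathlib

section
/- Let Σ be a finite alphabet, c ∈ Σ, and L₁, L₂ ⊆ Σ* languages. Let A₁' = (Q₁', Σ, δ₁', {q₀'}, F₁') be a complete DFA with L(A₁') = L₁, and let C₂ = (Q̂₂, Σ, δ̂₂, Î₂, F̂₂) be an NFA with L(C₂) = Σ* ∖ L₂. Define the NFA C = (Q₁' × 2^{Q̂₂}, Σ, δ̂, {(q₀', ∅)}, Q₁' × 2^{F̂₂}) whose transition relation δ̂ contains (p, R) →a (q, S) exactly when q = δ₁'(p, a) and either (i) p ∉ F₁' or a ≠ c, and S = f(R) for some function f : R → Q̂₂ with f(r) ∈ δ̂₂(r, a) for every r ∈ R, or (ii) p ∈ F₁' and a = c, and S = f(R) ∪ {s₀} for some such function f and some s₀ ∈ Î₂. Then L(C) = Σ* ∖ (L₁ · {c} · L₂). -/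
/-- The basic sequential complementation construction (Theorem 1): given a
complete DFA `A₁` (for `L₁`) and an NFA `C₂` (for `Σ* ∖ L₂`), build the NFA
`C` with states `Q₁' × 2^{Q̂₂}`, initial state `(q₀', ∅)`, accepting states
`Q₁' × 2^{F̂₂}`, where a transition `(p, R) →a (q, S)` exists iff
`q = δ₁'(p, a)` and either (i) `p ∉ F₁'` or `a ≠ c`, and `S = f '' R` for a
choice function `f` of `a`-successors in `C₂`, or (ii) `p ∈ F₁'` and `a = c`,
and `S = f '' R ∪ {s₀}` for such an `f` and some `s₀ ∈ Î₂`. -/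
def seqCompl {α σ₁ σ₂ : Type*} (c : α) (A₁ : DFA α σ₁) (C₂ : NFA α σ₂) :
    NFA α (σ₁ × Set σ₂) where
  step := fun pr a =>
    { qs | qs.1 = A₁.step pr.1 a ∧
        (((pr.1 ∉ A₁.accept ∨ a ≠ c) ∧
            ∃ f : σ₂ → σ₂, (∀ r ∈ pr.2, f r ∈ C₂.step r a) ∧ qs.2 = f '' pr.2) ∨
          (pr.1 ∈ A₁.accept ∧ a = c ∧
            ∃ f : σ₂ → σ₂, (∀ r ∈ pr.2, f r ∈ C₂.step r a) ∧
              ∃ s₀ ∈ C₂.start, qs.2 = f '' pr.2 ∪ {s₀})) }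
  start := {(A₁.start, ∅)}
  accept := {qs | qs.2 ⊆ C₂.accept}

/-!
After reading `x`, the set component `R` of a state of `seqCompl c A₁ C₂` keeps, for every
factorisation `x = u c v` with `u ∈ L(A₁)`, one state of a run of `C₂` on `v`: the run is started
when the `c` is read (case (ii)) and then advanced by the choice functions. Hence `R ⊆ F̂₂` forces
every such `v` into `L(C₂) = Σ* ∖ L₂`. Conversely, if every such `v` is accepted by `C₂`, choosing
the successors along accepting runs (which is why the induction carries a target set `T v` of
states for each suffix) reaches a state with `R ⊆ F̂₂`.
-/

open Language DFA

section Development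

variable {α σ₁ σ₂ : Type*}

theorem Language.mem_mul_singleton_mul {L₁ L₂ : Language α} {c : α} {x : List α} :
    x ∈ L₁ * {[c]} * L₂ ↔ ∃ u ∈ L₁, ∃ v ∈ L₂, x = u ++ c :: v := by
  simp only [mem_mul]
  constructor
  · rintro ⟨_, ⟨u, hu, _, rfl, rfl⟩, v, hv, rfl⟩
    exact ⟨u, hu, v, hv, by simp⟩
  · rintro ⟨u, hu, v, hv, rfl⟩
    exact ⟨u ++ [c], ⟨u, hu, [c], rfl, rfl⟩, v, hv, by simp⟩

namespace DFA

def markedSuffixes (c : α) (A : DFA α σ₁) (x : List α) : Set (List α) :=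
  {v | ∃ u, x = u ++ c :: v ∧ A.eval u ∈ A.accept}

variable {c : α} {A : DFA α σ₁}

theorem mem_accepts_mul_singleton_mul {L : Language α} {x : List α} :
    x ∈ A.accepts * {[c]} * L ↔ ∃ v ∈ A.markedSuffixes c x, v ∈ L := by
  simp only [mem_mul_singleton_mul, markedSuffixes, Set.mem_ofPred_eq, mem_accepts]
  aesop

theorem markedSuffixes_nil : A.markedSuffixes c [] = ∅ := by
  simp [markedSuffixes]

theorem mem_markedSuffixes_append_singleton {x v : List α} {a : α} :
    v ∈ A.markedSuffixes c (x ++ [a]) ↔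
      (∃ v' ∈ A.markedSuffixes c x, v = v' ++ [a]) ∨
        (v = [] ∧ a = c ∧ A.eval x ∈ A.accept) := by
  simp only [markedSuffixes, Set.mem_ofPred_eq]
  rcases v.eq_nil_or_concat with rfl | ⟨v, b, rfl⟩
  · simp
  · have e (u : List α) : u ++ c :: (v ++ [b]) = u ++ c :: v ++ [b] := by simp
    simp only [List.concat_eq_append, e, List.append_singleton_inj]
    aesop

end DFA

variable {c : α} {A₁ : DFA α σ₁} {C₂ : NFA α σ₂}

theorem seqCompl_step_spec {p q : σ₁} {R S : Set σ₂} {a : α}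
    (h : (q, S) ∈ (seqCompl c A₁ C₂).step (p, R) a) :
    q = A₁.step p a ∧ (∀ r ∈ R, ∃ s ∈ S, s ∈ C₂.step r a) ∧
      (p ∈ A₁.accept → a = c → ∃ s ∈ S, s ∈ C₂.start) := by
  obtain ⟨hq, ⟨hpa, f, hf, rfl⟩ | ⟨-, -, f, hf, s₀, hs₀, rfl⟩⟩ := h
  · refine ⟨hq, fun r hr => ⟨f r, ⟨r, hr, rfl⟩, hf r hr⟩, fun hp ha => ?_⟩
    exact absurd ⟨hp, ha⟩ (not_and_or.2 hpa)
  · exact ⟨hq, fun r hr => ⟨f r, .inl ⟨r, hr, rfl⟩, hf r hr⟩,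
      fun _ _ => ⟨s₀, .inr rfl, hs₀⟩⟩

theorem exists_mem_seqCompl_step {p : σ₁} {R : Set σ₂} {a : α} (P : σ₂ → Prop)
    (hR : ∀ r ∈ R, ∃ s ∈ C₂.step r a, P s)
    (hstart : p ∈ A₁.accept → a = c → ∃ s ∈ C₂.start, P s) :
    ∃ S, (∀ s ∈ S, P s) ∧ (A₁.step p a, S) ∈ (seqCompl c A₁ C₂).step (p, R) a := by
  have hR' : ∀ r, ∃ s, r ∈ R → s ∈ C₂.step r a ∧ P s := fun r => by
    by_cases hr : r ∈ R
    · obtain ⟨s, hs, hPs⟩ := hR r hr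
      exact ⟨s, fun _ => ⟨hs, hPs⟩⟩
    · exact ⟨r, fun h => absurd h hr⟩
  choose f hf using hR'
  have hfP : ∀ s ∈ f '' R, P s := by
    rintro _ ⟨r, hr, rfl⟩
    exact (hf r hr).2
  by_cases hpa : p ∈ A₁.accept ∧ a = c
  · obtain ⟨s₀, hs₀, hPs₀⟩ := hstart hpa.1 hpa.2
    refine ⟨f '' R ∪ {s₀}, ?_, rfl, .inr ⟨hpa.1, hpa.2, f, fun r hr => (hf r hr).1, s₀, hs₀, rfl⟩⟩
    rintro s (hs | rfl)
    exacts [hfP s hs, hPs₀]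
  · exact ⟨f '' R, hfP, rfl, .inl ⟨not_and_or.1 hpa, f, fun r hr => (hf r hr).1, rfl⟩⟩

theorem seqCompl_eval_sound {x : List α} {q : σ₁} {R : Set σ₂}
    (h : (q, R) ∈ (seqCompl c A₁ C₂).eval x) :
    q = A₁.eval x ∧ ∀ v ∈ A₁.markedSuffixes c x, ∃ s ∈ R, s ∈ C₂.eval v := by
  induction x using List.reverseRecOn generalizing q R with
  | nil =>
    obtain ⟨rfl, -⟩ := Prod.mk.inj h
    simp [markedSuffixes_nil]
  | append_singleton y a ih =>
    rw [NFA.eval_append_singleton, NFA.mem_stepSet] at h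
    obtain ⟨⟨p, R'⟩, hpR', hstep⟩ := h
    obtain ⟨rfl, hsucc, hstart⟩ := seqCompl_step_spec hstep
    obtain ⟨rfl, ih⟩ := ih hpR'
    refine ⟨(DFA.eval_append_singleton _ _ _).symm, fun v hv => ?_⟩
    rcases mem_markedSuffixes_append_singleton.1 hv with ⟨v', hv', rfl⟩ | ⟨rfl, rfl, hy⟩
    · obtain ⟨r, hr, hrv'⟩ := ih v' hv'
      obtain ⟨s, hs, hrs⟩ := hsucc r hr
      exact ⟨s, hs, by rw [NFA.eval_append_singleton, NFA.mem_stepSet]; exact ⟨r, hrv', hrs⟩⟩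
    · simpa [NFA.eval_nil] using hstart hy rfl

theorem exists_mem_seqCompl_eval (x : List α) (T : List α → Set σ₂)
    (hT : ∀ v ∈ A₁.markedSuffixes c x, ∃ s ∈ T v, s ∈ C₂.eval v) :
    ∃ R, (∀ s ∈ R, ∃ v ∈ A₁.markedSuffixes c x, s ∈ T v) ∧
      (A₁.eval x, R) ∈ (seqCompl c A₁ C₂).eval x := by
  induction x using List.reverseRecOn generalizing T with
  | nil => exact ⟨∅, by simp, rfl⟩
  | append_singleton y a ih =>
    obtain ⟨R, hRT, hR⟩ := ih (fun v => {r | ∃ s ∈ C₂.step r a, s ∈ T (v ++ [a])}) <| by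
      intro v hv
      obtain ⟨s, hsT, hs⟩ := hT (v ++ [a]) <|
        mem_markedSuffixes_append_singleton.2 (.inl ⟨v, hv, rfl⟩)
      rw [NFA.eval_append_singleton, NFA.mem_stepSet] at hs
      obtain ⟨r, hr, hrs⟩ := hs
      exact ⟨r, ⟨s, hrs, hsT⟩, hr⟩
    have hsucc : ∀ r ∈ R, ∃ s ∈ C₂.step r a, ∃ v ∈ A₁.markedSuffixes c (y ++ [a]), s ∈ T v := by
      intro r hr
      obtain ⟨v, hv, s, hrs, hsT⟩ := hRT r hr
      exact ⟨s, hrs, v ++ [a], mem_markedSuffixes_append_singleton.2 (.inl ⟨v, hv, rfl⟩), hsT⟩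
    have hstart : A₁.eval y ∈ A₁.accept → a = c →
        ∃ s ∈ C₂.start, ∃ v ∈ A₁.markedSuffixes c (y ++ [a]), s ∈ T v := by
      intro hy ha
      have hnil := mem_markedSuffixes_append_singleton.2 (.inr ⟨rfl, ha, hy⟩)
      obtain ⟨s, hsT, hs⟩ := hT [] hnil
      exact ⟨s, by simpa [NFA.eval_nil] using hs, [], hnil, hsT⟩
    obtain ⟨S, hST, hS⟩ := exists_mem_seqCompl_step _ hsucc hstart
    refine ⟨S, hST, ?_⟩
    rw [NFA.eval_append_singleton, NFA.mem_stepSet, DFA.eval_append_singleton]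
    exact ⟨_, hR, hS⟩

end Development

theorem seqCompl_accepts_general {α σ₁ σ₂ : Type*}
    (c : α) (L₁ L₂ : Language α)
    (A₁ : DFA α σ₁) (hA₁ : A₁.accepts = L₁)
    (C₂ : NFA α σ₂) (hC₂ : C₂.accepts = L₂ᶜ) :
    (seqCompl c A₁ C₂).accepts = (L₁ * {[c]} * L₂)ᶜ := by
  subst hA₁
  have hC₂' (v : List α) : v ∈ C₂.accepts ↔ v ∉ L₂ := by rw [hC₂]; rfl
  ext x
  suffices x ∈ (seqCompl c A₁ C₂).accepts ↔ ¬∃ v ∈ A₁.markedSuffixes c x, v ∈ L₂ from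
    this.trans (not_congr mem_accepts_mul_singleton_mul).symm
  rw [NFA.mem_accepts]
  constructor
  · rintro ⟨⟨q, R⟩, hRacc, hx⟩ ⟨v, hv, hvL₂⟩
    obtain ⟨s, hsR, hsv⟩ := (seqCompl_eval_sound hx).2 v hv
    exact (hC₂' v).1 (NFA.mem_accepts.2 ⟨s, hRacc hsR, hsv⟩) hvL₂
  · intro hx
    obtain ⟨R, hRacc, hR⟩ := exists_mem_seqCompl_eval (C₂ := C₂) x (fun _ => C₂.accept)
      fun v hv => NFA.mem_accepts.1 ((hC₂' v).2 fun hvL₂ => hx ⟨v, hv, hvL₂⟩)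
    exact ⟨(A₁.eval x, R), fun s hs => (hRacc s hs).choose_spec.2, hR⟩

/-- Theorem 1 of the paper: the sequential complementation construction yields
a complement of `L₁ · {c} · L₂`. -/
theorem seqCompl_accepts {α σ₁ σ₂ : Type*} [Fintype α] [Fintype σ₁] [Fintype σ₂]
    (c : α) (L₁ L₂ : Language α)
    (A₁ : DFA α σ₁) (hA₁ : A₁.accepts = L₁)
    (C₂ : NFA α σ₂) (hC₂ : C₂.accepts = L₂ᶜ) :
    (seqCompl c A₁ C₂).accepts = (L₁ * {[c]} * L₂)ᶜ :=
  seqCompl_accepts_general c L₁ L₂ A₁ hA₁ C₂ hC₂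
end

section
/- Let Σ be a finite alphabet, c ∈ Σ, L₁ ⊆ (Σ ∖ {c})* (i.e., no word of L₁ contains c), and L₂ ⊆ Σ*. Let C₁ = (Q̂₁, Σ ∖ {c}, δ̂₁, Î₁, F̂₁) be an NFA over Σ ∖ {c} with L(C₁) = (Σ ∖ {c})* ∖ L₁, and let C₂ = (Q̂₂, Σ, δ̂₂, Î₂, F̂₂) be an NFA over Σ with L(C₂) = Σ* ∖ L₂, with Q̂₁, Q̂₂ disjoint and s, t two fresh states. Define the NFAs C_pre = (Q̂₁ ∪ {s}, Σ, δ̂₁ ∪ {p →c s : p ∈ F̂₁} ∪ {s →a s : a ∈ Σ}, Î₁, {s}) and C_suf = (Q̂₂ ∪ {t}, Σ, δ̂₂ ∪ {t →c p : p ∈ Î₂} ∪ {t →a t : a ∈ Σ ∖ {c}}, {t}, {t} ∪ F̂₂). Then the union NFA C = C_pre ⊎ C_suf (disjoint union of states, transitions, initial and accepting sets) satisfies L(C) = Σ* ∖ (L₁ · {c} · L₂). -/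
/-!
`C_pre` accepts exactly the words `u c v` with `u ∈ L(C₁)`, and `C_suf` the words without `c`
together with the words `u c v` where `c ∉ u` and `v ∈ L(C₂)`. A word containing `c` has exactly
one factorisation `u c v` with `c ∉ u`, cutting at its first `c`. Since `L₁ ⊆ (Σ ∖ {c})*`, the word
lies in `L₁ c L₂` iff `u ∈ L₁` and `v ∈ L₂`, while `C` accepts it iff `u ∉ L₁` (through `C_pre`)
or `v ∉ L₂` (through `C_suf`).
-/

/-- `(Σ ∖ {c})*` -/
def noLetter {α : Type*} (c : α) : Language α := {w | c ∉ w}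

def NFA.disjUnion {α σ τ : Type*} (A : NFA α σ) (B : NFA α τ) : NFA α (σ ⊕ τ) where
  step := fun q a =>
    Sum.elim (fun p => Sum.inl '' A.step p a) (fun p => Sum.inr '' B.step p a) q
  start := Sum.inl '' A.start ∪ Sum.inr '' B.start
  accept := Sum.inl '' A.accept ∪ Sum.inr '' B.accept

/-- The prefix-checking part `C_pre` of the gate complement: `C₁` extended
with a fresh accepting state `s` (= `Sum.inr ()`), transitions `p →c s` for
every `p ∈ F̂₁`, and loops `s →a s` for all `a ∈ Σ`. -/
def gatePre {α σ₁ : Type*} (c : α) (C₁ : NFA α σ₁) : NFA α (σ₁ ⊕ Unit) where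
  step := fun q a =>
    Sum.elim
      (fun p => Sum.inl '' C₁.step p a ∪ {x | a = c ∧ p ∈ C₁.accept ∧ x = Sum.inr ()})
      (fun _ => {Sum.inr ()}) q
  start := Sum.inl '' C₁.start
  accept := {Sum.inr ()}

/-- The suffix-checking part `C_suf` of the gate complement: `C₂` extended
with a fresh initial and accepting state `t` (= `Sum.inr ()`), transitions
`t →c p` for every `p ∈ Î₂`, and loops `t →a t` for all `a ∈ Σ ∖ {c}`. -/
def gateSuf {α σ₂ : Type*} (c : α) (C₂ : NFA α σ₂) : NFA α (σ₂ ⊕ Unit) where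
  step := fun q a =>
    Sum.elim
      (fun p => Sum.inl '' C₂.step p a)
      (fun _ => {x | (a = c ∧ ∃ p ∈ C₂.start, x = Sum.inl p) ∨ (a ≠ c ∧ x = Sum.inr ())}) q
  start := {Sum.inr ()}
  accept := {Sum.inr ()} ∪ Sum.inl '' C₂.accept

theorem mem_noLetter {α : Type*} {c : α} {w : List α} : w ∈ noLetter c ↔ c ∉ w := Iff.rfl

theorem List.append_cons_inj_of_notMem_left {α : Type*} {u₁ u₂ v₁ v₂ : List α} {a : α}
    (h₁ : a ∉ u₁) (h₂ : a ∉ u₂) : u₁ ++ a :: v₁ = u₂ ++ a :: v₂ ↔ u₁ = u₂ ∧ v₁ = v₂ := by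
  classical
  refine ⟨fun h => ?_, by rintro ⟨rfl, rfl⟩; rfl⟩
  have hlen : u₁.length = u₂.length := by
    simpa [List.idxOf_append_of_notMem h₁, List.idxOf_append_of_notMem h₂] using
      congrArg (List.idxOf a) h
  simpa using List.append_inj h hlen

namespace Language

variable {α : Type*} {c : α} {K L : Language α} {u v w : List α}

@[simp] theorem mem_compl : w ∈ Kᶜ ↔ w ∉ K := Iff.rfl

@[simp] theorem mem_sdiff : w ∈ K \ L ↔ w ∈ K ∧ w ∉ L := Iff.rfl

@[simp] theorem mem_top : w ∈ (⊤ : Language α) := trivial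

theorem mem_mul_singleton_mul_s1 : w ∈ K * {[c]} * L ↔ ∃ u ∈ K, ∃ v ∈ L, w = u ++ c :: v := by
  simp only [mem_mul]
  constructor
  · rintro ⟨_, ⟨u, hu, _, rfl, rfl⟩, v, hv, rfl⟩
    exact ⟨u, hu, v, hv, by simp⟩
  · rintro ⟨u, hu, v, hv, rfl⟩
    exact ⟨_, ⟨u, hu, _, rfl, rfl⟩, v, hv, by simp⟩

theorem append_cons_mem_mul_singleton_mul_iff (hK : K ≤ noLetter c) (hu : c ∉ u) :
    u ++ c :: v ∈ K * {[c]} * L ↔ u ∈ K ∧ v ∈ L := by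
  rw [mem_mul_singleton_mul_s1]
  constructor
  · rintro ⟨u', hu', v', hv', h⟩
    obtain ⟨rfl, rfl⟩ := (List.append_cons_inj_of_notMem_left hu (hK hu')).1 h
    exact ⟨hu', hv'⟩
  · rintro ⟨hu, hv⟩
    exact ⟨u, hu, v, hv, rfl⟩

theorem cons_mem_noLetter_mul_singleton_mul_iff {a : α} (ha : a ≠ c) :
    a :: w ∈ noLetter c * {[c]} * L ↔ w ∈ noLetter c * {[c]} * L := by
  simp only [mem_mul_singleton_mul_s1, List.cons_eq_append_iff]
  constructor
  · rintro ⟨u, hu, v, hv, ⟨rfl, h⟩ | ⟨u, rfl, rfl⟩⟩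
    · exact absurd (List.cons.inj h).1 ha.symm
    · exact ⟨u, fun h => hu (List.mem_cons_of_mem a h), v, hv, rfl⟩
  · rintro ⟨u, hu, v, hv, rfl⟩
    have hau : c ∉ a :: u := by rw [List.mem_cons, not_or]; exact ⟨ha.symm, hu⟩
    exact ⟨a :: u, hau, v, hv, Or.inr ⟨u, rfl, rfl⟩⟩

theorem compl_mul_singleton_mul (hK : K ≤ noLetter c) :
    (K * {[c]} * L)ᶜ = (noLetter c \ K) * {[c]} * ⊤ + (noLetter c + noLetter c * {[c]} * Lᶜ) := by
  ext w
  by_cases hw : c ∈ w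
  · obtain ⟨u, v, rfl, hu⟩ := List.eq_append_cons_of_mem hw
    simp only [mem_compl, mem_add, append_cons_mem_mul_singleton_mul_iff hK hu,
      append_cons_mem_mul_singleton_mul_iff sdiff_le hu,
      append_cons_mem_mul_singleton_mul_iff le_rfl hu, mem_sdiff, mem_noLetter, mem_top]
    tauto
  · have hwK : w ∉ K * {[c]} * L := by
      rintro h
      obtain ⟨u, -, v, -, rfl⟩ := mem_mul_singleton_mul_s1.1 h
      exact hw List.mem_append_cons_self
    simp [mem_add, hwK, mem_noLetter, hw]

end Language

namespace NFA

variable {α σ τ : Type*}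

theorem mem_acceptsFrom_iff_exists_singleton (M : NFA α σ) {S : Set σ} {x : List α} :
    x ∈ M.acceptsFrom S ↔ ∃ s ∈ S, x ∈ M.acceptsFrom {s} := by
  simp only [mem_acceptsFrom, mem_evalFrom_iff_exists (S := S)]
  tauto

theorem cons_mem_acceptsFrom_singleton (M : NFA α σ) {s : σ} {a : α} {x : List α} :
    a :: x ∈ M.acceptsFrom {s} ↔ ∃ t ∈ M.step s a, x ∈ M.acceptsFrom {t} := by
  rw [cons_mem_acceptsFrom, stepSet_singleton, mem_acceptsFrom_iff_exists_singleton]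

theorem disjUnion_acceptsFrom_inl (A : NFA α σ) (B : NFA α τ) (s : σ) :
    (A.disjUnion B).acceptsFrom {Sum.inl s} = A.acceptsFrom {s} := by
  ext x
  induction x generalizing s with
  | nil => simp [nil_mem_acceptsFrom, disjUnion]
  | cons a x ih =>
    simp only [cons_mem_acceptsFrom_singleton, ← ih]
    simp [disjUnion]

theorem disjUnion_acceptsFrom_inr (A : NFA α σ) (B : NFA α τ) (t : τ) :
    (A.disjUnion B).acceptsFrom {Sum.inr t} = B.acceptsFrom {t} := by
  ext x
  induction x generalizing t with
  | nil => simp [nil_mem_acceptsFrom, disjUnion]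
  | cons a x ih =>
    simp only [cons_mem_acceptsFrom_singleton, ← ih]
    simp [disjUnion]

theorem disjUnion_accepts (A : NFA α σ) (B : NFA α τ) :
    (A.disjUnion B).accepts = A.accepts + B.accepts := by
  ext x
  rw [accepts_eq_acceptsFrom_start, mem_acceptsFrom_iff_exists_singleton, Language.mem_add,
    accepts_eq_acceptsFrom_start, mem_acceptsFrom_iff_exists_singleton,
    accepts_eq_acceptsFrom_start, mem_acceptsFrom_iff_exists_singleton]
  simp only [← disjUnion_acceptsFrom_inl A B, ← disjUnion_acceptsFrom_inr A B]
  simp [disjUnion]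

end NFA

section Gate

open NFA Language

variable {α σ₁ σ₂ : Type*} (c : α)

theorem gatePre_acceptsFrom_inr (C₁ : NFA α σ₁) :
    (gatePre c C₁).acceptsFrom {Sum.inr ()} = ⊤ := by
  ext x
  induction x with
  | nil => simp [nil_mem_acceptsFrom, gatePre]
  | cons a x ih => simpa [cons_mem_acceptsFrom_singleton, gatePre] using ih

theorem gatePre_acceptsFrom_inl (C₁ : NFA α σ₁) (p : σ₁) :
    (gatePre c C₁).acceptsFrom {Sum.inl p} = C₁.acceptsFrom {p} * {[c]} * ⊤ := by
  ext x
  induction x generalizing p with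
  | nil => simp [nil_mem_acceptsFrom, gatePre, mem_mul_singleton_mul_s1]
  | cons a x ih =>
    rw [cons_mem_acceptsFrom_singleton]
    simp only [mem_mul_singleton_mul_s1, mem_top, true_and, List.cons_eq_append_iff] at ih ⊢
    have hstep : (gatePre c C₁).step (Sum.inl p) a =
        Sum.inl '' C₁.step p a ∪ {q | a = c ∧ p ∈ C₁.accept ∧ q = Sum.inr ()} := rfl
    simp only [hstep, Set.mem_union, Set.mem_ofPred_eq, or_and_right, exists_or,
      Set.exists_mem_image, ih]
    constructor
    · rintro (⟨q, hq, u, hu, v, rfl⟩ | ⟨_, ⟨rfl, hp, rfl⟩, -⟩)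
      · exact ⟨a :: u, C₁.cons_mem_acceptsFrom_singleton.2 ⟨q, hq, hu⟩, Or.inr ⟨v, u, rfl, rfl⟩⟩
      · exact ⟨[], (nil_mem_acceptsFrom C₁).2 ⟨p, rfl, hp⟩, Or.inl ⟨x, rfl, rfl⟩⟩
    · rintro ⟨u, hu, ⟨v, rfl, h⟩ | ⟨v, u, rfl, rfl⟩⟩
      · obtain ⟨rfl, rfl⟩ := List.cons.inj h
        obtain ⟨_, rfl, hp⟩ := (nil_mem_acceptsFrom C₁).1 hu
        exact Or.inr ⟨_, ⟨rfl, hp, rfl⟩, by rw [gatePre_acceptsFrom_inr]; trivial⟩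
      · obtain ⟨q, hq, hu⟩ := C₁.cons_mem_acceptsFrom_singleton.1 hu
        exact Or.inl ⟨q, hq, u, hu, v, rfl⟩

theorem gatePre_accepts (C₁ : NFA α σ₁) :
    (gatePre c C₁).accepts = C₁.accepts * {[c]} * ⊤ := by
  ext x
  rw [accepts_eq_acceptsFrom_start, mem_acceptsFrom_iff_exists_singleton,
    accepts_eq_acceptsFrom_start, show (gatePre c C₁).start = Sum.inl '' C₁.start from rfl,
    Set.exists_mem_image]
  simp only [gatePre_acceptsFrom_inl, mem_mul_singleton_mul_s1, mem_top, true_and]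
  constructor
  · rintro ⟨p, hp, u, hu, v, rfl⟩
    exact ⟨u, C₁.mem_acceptsFrom_iff_exists_singleton.2 ⟨p, hp, hu⟩, v, rfl⟩
  · rintro ⟨u, hu, v, rfl⟩
    obtain ⟨p, hp, hu⟩ := C₁.mem_acceptsFrom_iff_exists_singleton.1 hu
    exact ⟨p, hp, u, hu, v, rfl⟩

theorem gateSuf_acceptsFrom_inl (C₂ : NFA α σ₂) (p : σ₂) :
    (gateSuf c C₂).acceptsFrom {Sum.inl p} = C₂.acceptsFrom {p} := by
  ext x
  induction x generalizing p with
  | nil => simp [nil_mem_acceptsFrom, gateSuf]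
  | cons a x ih =>
    simp only [cons_mem_acceptsFrom_singleton, ← ih]
    simp [gateSuf]

theorem gateSuf_acceptsFrom_inr (C₂ : NFA α σ₂) :
    (gateSuf c C₂).acceptsFrom {Sum.inr ()} = noLetter c + noLetter c * {[c]} * C₂.accepts := by
  ext x
  induction x with
  | nil => simp [nil_mem_acceptsFrom, gateSuf, mem_add, mem_noLetter]
  | cons a x ih =>
    have hstep : (gateSuf c C₂).step (Sum.inr ()) a =
        {q | (a = c ∧ ∃ p ∈ C₂.start, q = Sum.inl p) ∨ (a ≠ c ∧ q = Sum.inr ())} := rfl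
    rw [cons_mem_acceptsFrom_singleton, hstep]
    by_cases ha : a = c
    · subst ha
      have hx : a :: x ∈ noLetter a * {[a]} * C₂.accepts ↔
          ∃ p ∈ C₂.start, x ∈ C₂.acceptsFrom {p} := by
        rw [← C₂.mem_acceptsFrom_iff_exists_singleton, ← accepts_eq_acceptsFrom_start]
        simpa [mem_noLetter] using append_cons_mem_mul_singleton_mul_iff
          (K := noLetter a) (L := C₂.accepts) (u := []) (v := x) le_rfl List.not_mem_nil
      simp [mem_add, mem_noLetter, hx, gateSuf_acceptsFrom_inl]
    · simp [ha, Ne.symm ha, ih, mem_add, mem_noLetter, cons_mem_noLetter_mul_singleton_mul_iff ha]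

theorem gateSuf_accepts (C₂ : NFA α σ₂) :
    (gateSuf c C₂).accepts = noLetter c + noLetter c * {[c]} * C₂.accepts :=
  gateSuf_acceptsFrom_inr c C₂

end Gate

theorem gateCompl_accepts_general {α σ₁ σ₂ : Type*}
    (c : α) (L₁ L₂ : Language α) (hL₁ : L₁ ≤ noLetter c)
    (C₁ : NFA α σ₁)
    (hC₁ : C₁.accepts = noLetter c \ L₁)
    (C₂ : NFA α σ₂) (hC₂ : C₂.accepts = L₂ᶜ) :
    ((gatePre c C₁).disjUnion (gateSuf c C₂)).accepts = (L₁ * {[c]} * L₂)ᶜ := by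
  rw [NFA.disjUnion_accepts, gatePre_accepts, gateSuf_accepts, hC₁, hC₂,
    Language.compl_mul_singleton_mul hL₁]

/-- Theorem 2 of the paper (basic gate complementation): if `C₁` is an NFA
over `Σ ∖ {c}` (no `c`-transitions) accepting `(Σ ∖ {c})* ∖ L₁`, and `C₂` an
NFA over `Σ` accepting `Σ* ∖ L₂`, then `C = C_pre ⊎ C_suf` accepts
`Σ* ∖ (L₁ · {c} · L₂)`. -/
theorem gateCompl_accepts {α σ₁ σ₂ : Type*} [Fintype α] [Fintype σ₁] [Fintype σ₂]
    (c : α) (L₁ L₂ : Language α) (hL₁ : L₁ ≤ noLetter c)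
    (C₁ : NFA α σ₁) (hC₁c : ∀ q, C₁.step q c = ∅)
    (hC₁ : C₁.accepts = noLetter c \ L₁)
    (C₂ : NFA α σ₂) (hC₂ : C₂.accepts = L₂ᶜ) :
    ((gatePre c C₁).disjUnion (gateSuf c C₂)).accepts = (L₁ * {[c]} * L₂)ᶜ :=
  gateCompl_accepts_general c L₁ L₂ hL₁ C₁ hC₁ C₂ hC₂
end

section
/- Let A be an NFA over a finite alphabet Σ. Let rev(A) denote the reverse of A (all transitions reversed, initial and accepting state sets swapped), let det(B) denote the complete powerset DFA of an NFA B (states are subsets of B's states, start state is B's set of initial states, a subset is accepting iff it intersects B's accepting set), and let co(D) denote the DFA obtained from a complete DFA D by swapping accepting and non-accepting states. Then the NFA rev(co(det(rev(A)))) accepts exactly Σ* ∖ L(A). -/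
/-- The reverse of an NFA: all transitions reversed, initial and accepting
state sets swapped. -/
def NFA.reverse' {α σ : Type*} (M : NFA α σ) : NFA α σ where
  step := fun q a => {r | q ∈ M.step r a}
  start := M.accept
  accept := M.start

/-- The complement of a complete DFA: swap accepting and non-accepting
states. -/
def DFA.complement {α σ : Type*} (D : DFA α σ) : DFA α σ where
  step := D.step
  start := D.start
  accept := D.acceptᶜ

theorem NFA.reverse'_eq_reverse {α σ : Type*} (M : NFA α σ) : M.reverse' = M.reverse :=
  rfl

theorem DFA.complement_eq_compl {α σ : Type*} (D : DFA α σ) : D.complement = Dᶜ :=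
  rfl

theorem NFA.accepts_reverse {α σ : Type*} (M : NFA α σ) :
    M.reverse.accepts = M.accepts.reverse :=
  Set.ext fun _ => M.mem_accepts_reverse

theorem Language.reverse_compl {α : Type*} (l : Language α) : lᶜ.reverse = l.reverseᶜ :=
  rfl

theorem reverse_powerset_complementation_general {α σ : Type*}
    (A : NFA α σ) :
    (A.reverse'.toDFA.complement.toNFA.reverse').accepts = A.acceptsᶜ := by
  rw [NFA.reverse'_eq_reverse, NFA.reverse'_eq_reverse, DFA.complement_eq_compl,
    NFA.accepts_reverse, DFA.toNFA_correct, DFA.accepts_compl, NFA.toDFA_correct,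
    NFA.accepts_reverse, Language.reverse_compl, Language.reverse_reverse]

/-- Reverse powerset complementation (Section 3): `rev(co(det(rev(A))))`
accepts exactly the complement of `L(A)`.  Here `det` is the powerset DFA
construction `NFA.toDFA` and the final reverse is applied to the DFA viewed
as an NFA. -/
theorem reverse_powerset_complementation {α σ : Type*} [Fintype α] [Fintype σ]
    (A : NFA α σ) :
    (A.reverse'.toDFA.complement.toNFA.reverse').accepts = A.acceptsᶜ :=
  reverse_powerset_complementation_general A
end

section
/- Fix n ∈ ℕ and let Lₙ = {a, b}* · {a} · {a, b}ⁿ over the two-letter alphabet {a, b}. Then every DFA whose language is {a, b}* ∖ Lₙ has at least 2^{n+1} states, and there exists a DFA with exactly 2^{n+1} states whose language is {a, b}* ∖ Lₙ. -/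
/-- The language of all words of length `n` over the alphabet `α`,
i.e. `{a, b}ⁿ` when `α` models the two-letter alphabet. -/
def lenLang (α : Type*) (n : ℕ) : Language α := {w | w.length = n}

/-- A (possibly partial) DFA modeled as an NFA: a single initial state and at
most one `a`-successor of each state for each letter `a`. -/
def IsPartialDFA {α σ : Type*} (M : NFA α σ) : Prop :=
  (∃ q, M.start = {q}) ∧ ∀ q a, (M.step q a).Subsingleton

/-!
A DFA for the complement of `Lₙ` must remember the last `n + 1` letters read: the words of
length `n + 1` have pairwise distinct, nonempty left quotients (two words differing at position
`k` are separated by appending `bᵏ`), so they reach pairwise distinct states. Conversely, the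
shift register holding the last `n + 1` letters, padded with `b`, recognizes `Lₙ`, and
complementing its accepting states gives the DFA for the complement.
-/

open Function

section PartialDFA

variable {α σ : Type*} {M : NFA α σ}

theorem NFA.leftQuotient_accepts (M : NFA α σ) (x : List α) :
    M.accepts.leftQuotient x = M.acceptsFrom (M.eval x) := by
  ext y
  exact NFA.append_mem_acceptsFrom M

theorem NFA.eval_nonempty_of_append_mem_accepts {x y : List α} (h : x ++ y ∈ M.accepts) :
    (M.eval x).Nonempty := by
  obtain ⟨_, -, hs⟩ := (NFA.append_mem_acceptsFrom M).1 h
  obtain ⟨t, ht, -⟩ := NFA.mem_evalFrom_iff_exists.1 hs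
  exact ⟨t, ht⟩

theorem IsPartialDFA.evalFrom_subsingleton (hM : IsPartialDFA M) {S : Set σ}
    (hS : S.Subsingleton) (x : List α) : (M.evalFrom S x).Subsingleton := by
  induction x generalizing S with
  | nil => exact hS
  | cons a x ih =>
    refine ih fun s hs t ht => ?_
    obtain ⟨s₀, hs₀, hs⟩ := NFA.mem_stepSet.1 hs
    obtain ⟨t₀, ht₀, ht⟩ := NFA.mem_stepSet.1 ht
    obtain rfl := hS hs₀ ht₀
    exact hM.2 s₀ a hs ht

theorem IsPartialDFA.eval_subsingleton (hM : IsPartialDFA M) (x : List α) :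
    (M.eval x).Subsingleton := by
  obtain ⟨q, hq⟩ := hM.1
  exact hM.evalFrom_subsingleton (hq ▸ Set.subsingleton_singleton) x

theorem IsPartialDFA.card_le_of_injective_leftQuotient [Fintype σ] (hM : IsPartialDFA M)
    {ι : Type*} [Fintype ι] (f : ι → List α) (hne : ∀ i, ∃ y, f i ++ y ∈ M.accepts)
    (hinj : Injective fun i => M.accepts.leftQuotient (f i)) :
    Fintype.card ι ≤ Fintype.card σ := by
  choose s hs using fun i => NFA.eval_nonempty_of_append_mem_accepts (hne i).choose_spec
  have heval : ∀ i, M.eval (f i) = {s i} := fun i =>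
    (hM.eval_subsingleton (f i)).eq_singleton_of_mem (hs i)
  refine Fintype.card_le_of_injective s fun i j hij => hinj ?_
  simp only [NFA.leftQuotient_accepts, heval, hij]

theorem DFA.isPartialDFA_toNFA (M : DFA α σ) : IsPartialDFA M.toNFA :=
  ⟨⟨M.start, rfl⟩, fun _ _ => Set.subsingleton_singleton⟩

end PartialDFA

section LastNthLetterA

variable {n : ℕ}

/-- `Lₙ = {a, b}* · {a} · {a, b}ⁿ`, with `a = true` and `b = false`. -/
def lastNthLetterA (n : ℕ) : Language Bool := ⊤ * {[true]} * lenLang Bool n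

theorem mem_lastNthLetterA_iff_exists {w : List Bool} :
    w ∈ lastNthLetterA n ↔ ∃ u v : List Bool, v.length = n ∧ w = u ++ true :: v := by
  simp only [lastNthLetterA, lenLang]
  constructor
  · rintro ⟨_, ⟨u, -, _, rfl, rfl⟩, v, hv, rfl⟩
    exact ⟨u, v, hv, by simp⟩
  · rintro ⟨u, v, hv, rfl⟩
    exact ⟨u ++ [true], ⟨u, trivial, [true], rfl, rfl⟩, v, hv, by simp⟩

theorem mem_lastNthLetterA_iff {w : List Bool} :
    w ∈ lastNthLetterA n ↔ w.reverse.getD n false = true := by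
  rw [mem_lastNthLetterA_iff_exists]
  constructor
  · rintro ⟨u, v, rfl, rfl⟩
    simp
  · intro h
    have hn : n < w.reverse.length := by
      by_contra hn
      rw [List.getD_eq_default _ _ (not_lt.1 hn)] at h
      exact Bool.false_ne_true h
    rw [List.getD_eq_getElem _ _ hn] at h
    refine ⟨(w.reverse.drop (n + 1)).reverse, (w.reverse.take n).reverse,
      by rw [List.length_reverse, List.length_take]; omega, ?_⟩
    rw [← List.reverse_inj]
    simp only [List.reverse_append, List.reverse_cons, List.reverse_reverse, List.append_assoc,
      List.singleton_append]
    rw [← h, List.getElem_cons_drop, List.take_append_drop]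

theorem append_replicate_notMem_lastNthLetterA (w : List Bool) :
    w ++ List.replicate (n + 1) false ∉ lastNthLetterA n := by
  rw [mem_lastNthLetterA_iff, List.reverse_append, List.reverse_replicate,
    List.getD_append _ _ _ _ (by simp)]
  simp

theorem ofFn_append_replicate_mem_lastNthLetterA_iff (u : Fin (n + 1) → Bool) (k : Fin (n + 1)) :
    List.ofFn u ++ List.replicate k false ∈ lastNthLetterA n ↔ u k = true := by
  rw [mem_lastNthLetterA_iff, List.reverse_append, List.reverse_replicate,
    List.getD_append_right _ _ _ _ (by simp [Nat.le_of_lt_succ k.isLt]),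
    List.getD_eq_getElem _ _ (by simp), List.getElem_reverse, List.getElem_ofFn]
  refine Eq.congr_left (congrArg u (Fin.ext ?_))
  simp only [List.length_ofFn, List.length_replicate]
  omega

theorem injective_leftQuotient_compl_lastNthLetterA :
    Injective fun u : Fin (n + 1) → Bool => (lastNthLetterA n)ᶜ.leftQuotient (List.ofFn u) := by
  intro u v huv
  funext k
  have hk : List.ofFn u ++ List.replicate k false ∉ lastNthLetterA n ↔
      List.ofFn v ++ List.replicate k false ∉ lastNthLetterA n :=
    Iff.of_eq (congrArg (List.replicate k false ∈ ·) huv)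
  rwa [not_iff_not, ofFn_append_replicate_mem_lastNthLetterA_iff,
    ofFn_append_replicate_mem_lastNthLetterA_iff, ← Bool.eq_iff_iff] at hk

/-- The shift register of the last `n + 1` letters read, most recent first. -/
def window (n : ℕ) : DFA Bool (Fin (n + 1) → Bool) where
  step q a := Fin.cons a (Fin.init q)
  start := fun _ => false
  accept := {q | q (Fin.last n) = true}

theorem eval_window (w : List Bool) :
    (window n).eval w = fun i : Fin (n + 1) => w.reverse.getD i false := by
  induction w using List.reverseRecOn with
  | nil => rfl
  | append_singleton w a ih =>
    rw [DFA.eval_append_singleton, ih]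
    funext i
    refine Fin.cases ?_ (fun j => ?_) i
    · simp [window]
    · simp [window, Fin.init]

theorem accepts_window : (window n).accepts = lastNthLetterA n := by
  ext w
  rw [DFA.mem_accepts, eval_window, mem_lastNthLetterA_iff]
  rfl

end LastNthLetterA

/-- Sections 1 and 3 of the paper: every DFA for the complement of
`Lₙ = {a, b}* · {a} · {a, b}ⁿ` has at least `2^(n+1)` states, and there is one
with exactly `2^(n+1)` states.  The alphabet `{a, b}` is modeled by `Bool`
with `a = true`. -/
theorem minimal_dfa_complement_lastNthLetterA (n : ℕ) :
    (∀ (σ : Type) [Fintype σ] (M : NFA Bool σ), IsPartialDFA M →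
        M.accepts = (⊤ * {[true]} * lenLang Bool n)ᶜ →
        2 ^ (n + 1) ≤ Fintype.card σ) ∧
      ∃ M : NFA Bool (Fin (2 ^ (n + 1))), IsPartialDFA M ∧
        M.accepts = (⊤ * {[true]} * lenLang Bool n)ᶜ := by
  have hcard : Fintype.card (Fin (n + 1) → Bool) = 2 ^ (n + 1) := by simp
  refine ⟨fun σ _ M hM hacc => ?_, ?_⟩
  · change M.accepts = (lastNthLetterA n)ᶜ at hacc
    rw [← hcard]
    refine hM.card_le_of_injective_leftQuotient List.ofFn (fun u => ?_) ?_
    · exact ⟨_, by rw [hacc]; exact append_replicate_notMem_lastNthLetterA (List.ofFn u)⟩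
    · exact hacc ▸ injective_leftQuotient_compl_lastNthLetterA
  · let M := DFA.reindex (Fintype.equivFinOfCardEq hcard) (window n)ᶜ
    refine ⟨M.toNFA, M.isPartialDFA_toNFA, ?_⟩
    rw [DFA.toNFA_correct, DFA.accepts_reindex, DFA.accepts_compl, accepts_window]
    rfl
end

section
/- For every n ∈ ℕ there exists an NFA over the two-letter alphabet {a, b} with at most n + 2 states whose language is the complement {a, b}* ∖ ({a, b}* · {a} · {a, b}ⁿ). -/
variable {α : Type*}

theorem mem_top_mul_singleton_mul_lenLang {a : α} {n : ℕ} {w : List α} :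
    w ∈ ⊤ * {[a]} * lenLang α n ↔ w.reverse[n]? = some a := by
  constructor
  · rintro ⟨_, ⟨u, -, _, rfl, rfl⟩, v, hv, rfl⟩
    change v.length = n at hv
    subst hv
    simp
  · intro h
    obtain ⟨hn, hrn⟩ := List.getElem?_eq_some_iff.mp h
    refine ⟨(w.reverse.drop (n + 1)).reverse ++ [a], ⟨_, trivial, _, rfl, rfl⟩,
      (w.reverse.take n).reverse, by simpa [lenLang] using hn.le, ?_⟩
    rw [← List.reverse_inj]
    simp only [List.reverse_append, List.reverse_reverse, List.reverse_singleton]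
    rw [← hrn, List.singleton_append, ← List.drop_eq_getElem_cons,
      List.take_append_drop]

/-- `none` is the waiting state; `some j` means that the letter read `j` steps ago differs from
`a`, or that fewer than `j + 1` letters have been read. -/
def nthLastNeNFA (a : α) (n : ℕ) : NFA α (Option (Fin (n + 1))) where
  step p x := {q | match p, q with
    | none, none => True
    | none, some j => x ≠ a ∧ (j : ℕ) = 0
    | some i, some j => (j : ℕ) = i + 1
    | some _, none => False}
  start := Set.univ
  accept := {some (Fin.last n)}

namespace nthLastNeNFA

variable (a : α) (n : ℕ)

theorem none_mem_eval (w : List α) : none ∈ (nthLastNeNFA a n).eval w := by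
  induction w using List.reverseRecOn with
  | nil => trivial
  | append_singleton w x ih =>
    rw [NFA.eval_append_singleton, NFA.mem_stepSet]
    exact ⟨none, ih, trivial⟩

theorem some_mem_eval_iff (w : List α) (j : Fin (n + 1)) :
    some j ∈ (nthLastNeNFA a n).eval w ↔ w.reverse[(j : ℕ)]? ≠ some a := by
  induction w using List.reverseRecOn generalizing j with
  | nil => simp [nthLastNeNFA]
  | append_singleton w x ih =>
    rw [NFA.eval_append_singleton, NFA.mem_stepSet, List.reverse_append,
      List.reverse_singleton, List.singleton_append]
    cases j using Fin.cases with
    | zero =>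
      constructor
      · rintro ⟨_ | i, -, hx⟩
        · simpa using hx.1
        · simp [nthLastNeNFA] at hx
      · intro hx
        exact ⟨none, none_mem_eval a n w, by simpa using hx, rfl⟩
    | succ i =>
      rw [Fin.val_succ, List.getElem?_cons_succ, ← Fin.val_castSucc, ← ih]
      constructor
      · rintro ⟨_ | k, hk, hx⟩
        · simp [nthLastNeNFA] at hx
        · obtain rfl : k = i.castSucc := Fin.ext (by simpa [nthLastNeNFA] using hx.symm)
          exact hk
      · intro hi
        exact ⟨some i.castSucc, hi, by simp [nthLastNeNFA]⟩

theorem accepts_eq : (nthLastNeNFA a n).accepts = (⊤ * {[a]} * lenLang α n)ᶜ := by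
  ext w
  change _ ↔ w ∉ (⊤ * {[a]} * lenLang α n : Language α)
  rw [mem_top_mul_singleton_mul_lenLang, ← ne_eq, ← Fin.val_last n,
    ← some_mem_eval_iff]
  exact exists_eq_left

end nthLastNeNFA

/-- Sections 1 and 3 of the paper: for every `n` there is an NFA over the
two-letter alphabet `{a, b}` (modeled by `Bool`, with `a = true`) with at most
`n + 2` states accepting the complement `{a, b}* ∖ ({a, b}* · {a} · {a, b}ⁿ)`. -/
theorem exists_small_nfa_complement_lastNthLetterA (n : ℕ) :
    ∃ (σ : Type) (inst : Fintype σ) (M : NFA Bool σ),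
      @Fintype.card σ inst ≤ n + 2 ∧
      M.accepts = (⊤ * {[true]} * lenLang Bool n)ᶜ :=
  ⟨Option (Fin (n + 1)), inferInstance, nthLastNeNFA true n, by simp,
    nthLastNeNFA.accepts_eq true n⟩
end

section
/- For every n ∈ ℕ there exists an NFA over the two-letter alphabet {a, b} with exactly 2n + 3 states whose language is {a, b}ⁿ · {a} · {a, b}* · {a} · {a, b}ⁿ. -/
namespace Language

variable {α : Type*}

theorem mem_singleton {w v : List α} : w ∈ ({v} : Language α) ↔ w = v := Iff.rfl

theorem append_singleton_mem_mul_singleton {L : Language α} {w : List α} {a b : α} :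
    w ++ [a] ∈ L * {[b]} ↔ w ∈ L ∧ a = b := by
  simp only [mem_mul, mem_singleton, exists_eq_left, List.append_singleton_inj]
  exact ⟨fun ⟨u, hu, huw, hba⟩ => huw ▸ ⟨hu, hba.symm⟩,
    fun ⟨hw, hab⟩ => ⟨w, hw, rfl, hab.symm⟩⟩

theorem append_singleton_mem_mul_top {L : Language α} {w : List α} {a : α} :
    w ++ [a] ∈ L * ⊤ ↔ w ++ [a] ∈ L ∨ w ∈ L * ⊤ := by
  simp only [mem_mul]
  constructor
  · rintro ⟨u, hu, v, -, huv⟩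
    rcases List.eq_nil_or_concat' v with rfl | ⟨v, b, rfl⟩
    · exact .inl (by simpa [← huv] using hu)
    · rw [← List.append_assoc, List.append_singleton_inj] at huv
      exact .inr ⟨u, hu, v, trivial, huv.1⟩
  · rintro (hw | ⟨u, hu, v, -, rfl⟩)
    · exact ⟨w ++ [a], hw, [], trivial, List.append_nil _⟩
    · exact ⟨u, hu, v ++ [a], trivial, (List.append_assoc _ _ _).symm⟩

end Language

@[simp]
theorem mem_lenLang {α : Type*} {w : List α} {n : ℕ} : w ∈ lenLang α n ↔ w.length = n :=
  Iff.rfl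

theorem lenLang_zero (α : Type*) : lenLang α 0 = 1 := by
  ext w
  simp

theorem append_singleton_mem_mul_lenLang_succ {α : Type*} {L : Language α} {w : List α} {a : α}
    {k : ℕ} : w ++ [a] ∈ L * lenLang α (k + 1) ↔ w ∈ L * lenLang α k := by
  simp only [Language.mem_mul, mem_lenLang]
  constructor
  · rintro ⟨u, hu, v, hv, huv⟩
    rcases List.eq_nil_or_concat' v with rfl | ⟨v, b, rfl⟩
    · simp at hv
    · rw [← List.append_assoc, List.append_singleton_inj] at huv
      exact ⟨u, hu, v, by simpa using hv, huv.1⟩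
  · rintro ⟨u, hu, v, rfl, rfl⟩
    exact ⟨u, hu, v ++ [a], by simp, (List.append_assoc _ _ _).symm⟩

namespace NFA

variable {α σ τ : Type*}

theorem mem_eval_iff_of_append_singleton (M : NFA α σ) (L : σ → Language α)
    (nil : ∀ q, q ∈ M.start ↔ [] ∈ L q)
    (append_singleton : ∀ w a q, w ++ [a] ∈ L q ↔ ∃ p, w ∈ L p ∧ q ∈ M.step p a)
    (w : List α) (q : σ) : q ∈ M.eval w ↔ w ∈ L q := by
  induction w using List.reverseRecOn generalizing q with
  | nil => exact nil q
  | append_singleton w a ih => simp only [eval_append_singleton, mem_stepSet, ih, append_singleton]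

def reindex (e : σ ≃ τ) (M : NFA α σ) : NFA α τ where
  step q a := e.symm ⁻¹' M.step (e.symm q) a
  start := e.symm ⁻¹' M.start
  accept := e.symm ⁻¹' M.accept

theorem mem_eval_reindex (e : σ ≃ τ) (M : NFA α σ) (w : List α) (q : τ) :
    q ∈ (M.reindex e).eval w ↔ e.symm q ∈ M.eval w := by
  refine mem_eval_iff_of_append_singleton _
    (fun q => show Language α from {w | e.symm q ∈ M.eval w}) (fun _ => Iff.rfl)
    (fun w a q => ?_) w q
  change e.symm q ∈ M.eval (w ++ [a]) ↔
    ∃ p, e.symm p ∈ M.eval w ∧ e.symm q ∈ M.step (e.symm p) a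
  rw [eval_append_singleton, mem_stepSet]
  exact e.exists_congr_left

@[simp]
theorem accepts_reindex (e : σ ≃ τ) (M : NFA α σ) : (M.reindex e).accepts = M.accepts := by
  ext w
  change (∃ q, e.symm q ∈ M.accept ∧ q ∈ (M.reindex e).eval w) ↔
    ∃ p, p ∈ M.accept ∧ p ∈ M.eval w
  simp only [mem_eval_reindex]
  exact (e.exists_congr_left (p := fun p => p ∈ M.accept ∧ p ∈ M.eval w)).symm

end NFA

section NfaB

variable {α : Type*} (a : α) (n : ℕ)

abbrev StateB (n : ℕ) := Fin (n + 1) ⊕ Unit ⊕ Fin (n + 1)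

def StepB : StateB n → α → StateB n → Prop
  | .inl i, _, .inl j => (j : ℕ) = i + 1
  | .inl i, b, .inr (.inl ()) => (i : ℕ) = n ∧ b = a
  | .inr (.inl ()), _, .inr (.inl ()) => True
  | .inr (.inl ()), b, .inr (.inr j) => (j : ℕ) = 0 ∧ b = a
  | .inr (.inr i), _, .inr (.inr j) => (j : ℕ) = i + 1
  | _, _, _ => False

def nfaB : NFA α (StateB n) where
  step p b := {q | StepB a n p b q}
  start := {.inl 0}
  accept := {.inr (.inr (Fin.last n))}

def stateLangB : StateB n → Language α
  | .inl i => lenLang α i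
  | .inr (.inl ()) => lenLang α n * {[a]} * ⊤
  | .inr (.inr j) => lenLang α n * {[a]} * ⊤ * {[a]} * lenLang α j

theorem mem_start_nfaB_iff (q : StateB n) :
    q ∈ (nfaB a n).start ↔ [] ∈ stateLangB a n q := by
  rcases q with i | ⟨⟨⟩⟩ | j
  · simp only [nfaB, stateLangB, Set.mem_singleton_iff, Sum.inl.injEq, mem_lenLang,
      List.length_nil, Fin.ext_iff, Fin.val_zero]
    exact eq_comm
  all_goals simp [nfaB, stateLangB, Language.mem_mul, Language.mem_singleton]

theorem append_singleton_mem_stateLangB_iff (w : List α) (b : α) (q : StateB n) :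
    w ++ [b] ∈ stateLangB a n q ↔
      ∃ p, w ∈ stateLangB a n p ∧ q ∈ (nfaB a n).step p b := by
  simp only [nfaB, Set.mem_ofPred_eq, Sum.exists, Unique.exists_iff]
  rcases q with ⟨j, hj⟩ | ⟨⟨⟩⟩ | ⟨_ | k, hk⟩
  · simp only [stateLangB, StepB, mem_lenLang, List.length_append, List.length_singleton,
      and_false, exists_false, or_false]
    refine ⟨fun h => ⟨⟨w.length, by omega⟩, rfl, h.symm⟩, ?_⟩
    rintro ⟨i, hi, rfl⟩
    omega
  · simp only [stateLangB, StepB, Language.append_singleton_mem_mul_top,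
      Language.append_singleton_mem_mul_singleton, and_true, and_false, exists_false, or_false]
    constructor
    · rintro (⟨hw, rfl⟩ | hw)
      · exact .inl ⟨Fin.last n, hw, rfl, rfl⟩
      · exact .inr hw
    · rintro (⟨i, hw, hi, rfl⟩ | hw)
      · exact .inl ⟨hi ▸ hw, rfl⟩
      · exact .inr hw
  · simp [stateLangB, StepB, lenLang_zero, Language.append_singleton_mem_mul_singleton]
  · simp only [stateLangB, StepB, append_singleton_mem_mul_lenLang_succ, and_false,
      exists_false, Nat.add_one_ne_zero, false_and, false_or]
    refine ⟨fun hw => ⟨⟨k, by omega⟩, hw, rfl⟩, ?_⟩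
    rintro ⟨i, hw, hi⟩
    rwa [show k = i by omega]

theorem mem_eval_nfaB_iff (w : List α) (q : StateB n) :
    q ∈ (nfaB a n).eval w ↔ w ∈ stateLangB a n q :=
  (nfaB a n).mem_eval_iff_of_append_singleton _ (mem_start_nfaB_iff a n)
    (append_singleton_mem_stateLangB_iff a n) w q

theorem accepts_nfaB : (nfaB a n).accepts = lenLang α n * {[a]} * ⊤ * {[a]} * lenLang α n := by
  ext w
  change (∃ q ∈ ({.inr (.inr (Fin.last n))} : Set (StateB n)), q ∈ (nfaB a n).eval w) ↔ _
  simp [mem_eval_nfaB_iff, stateLangB]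

end NfaB

/-- The alphabet `{a, b}` is `Bool`, with `a = true`. -/
theorem exists_nfa_seq_family (n : ℕ) :
    ∃ M : NFA Bool (Fin (2 * n + 3)),
      M.accepts = lenLang Bool n * {[true]} * ⊤ * {[true]} * lenLang Bool n := by
  let e : StateB n ≃ Fin (2 * n + 3) := Fintype.equivFinOfCardEq (by simp; omega)
  exact ⟨(nfaB true n).reindex e, by rw [NFA.accepts_reindex, accepts_nfaB]⟩
end

section
/- For every n ∈ ℕ there exists an NFA over the two-letter alphabet {a, b} with at most 2n + 4 states whose language is the complement {a, b}* ∖ ({a, b}ⁿ · {a} · {a, b}* · {a} · {a, b}ⁿ). -/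
/-! A word `w` lies outside `Σⁿ a Σ* a Σⁿ` iff `|w| ≤ 2n + 1`, or its letter at position `n` is
not `a`, or its letter at position `|w| - n - 1` is not `a`. The automaton guesses a disjunct.
A prefix counter `q₀, …, qₙ` accepts the words of length `≤ n` and, reading a non-`a` letter in `qₙ`,
enters an accepting sink. A suffix counter `t₀, …, tₙ` accepts exactly `n` letters after it is
entered; it is entered from a waiting state on a non-`a` letter, and from any `qᵢ` on any letter,
which covers every word with `n < |w| ≤ 2n + 1` because then the position `|w| - n - 1` is at
most `n`. -/

theorem List.eq_take_append_cons_drop_of_getElem?_eq_some {α : Type*} {w : List α} {k : ℕ}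
    {c : α} (h : w[k]? = some c) : w = w.take k ++ c :: w.drop (k + 1) := by
  obtain ⟨hk, rfl⟩ := getElem?_eq_some_iff.mp h
  rw [← drop_eq_getElem_cons hk, take_append_drop]

namespace SeqComplement

variable {α : Type*} (a : α) (n : ℕ)

def language : Language α := lenLang α n * {[a]} * ⊤ * {[a]} * lenLang α n

/-- `inl i` is the prefix counter `qᵢ`, `inr (inl j)` the suffix counter `tⱼ`,
`inr (inr false)` the waiting state and `inr (inr true)` the universal sink. -/
abbrev State := Fin (n + 1) ⊕ Fin (n + 1) ⊕ Bool

def Step : State n → α → State n → Prop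
  | .inl i, _, .inl i' => (i' : ℕ) = i + 1
  | .inl _, _, .inr (.inl j) => j = 0
  | .inl i, c, .inr (.inr true) => (i : ℕ) = n ∧ c ≠ a
  | .inr (.inl j), _, .inr (.inl j') => (j' : ℕ) = j + 1
  | .inr (.inr false), c, .inr (.inl j) => j = 0 ∧ c ≠ a
  | .inr (.inr false), _, .inr (.inr false) => True
  | .inr (.inr true), _, .inr (.inr true) => True
  | _, _, _ => False

def nfa : NFA α (State n) where
  step s c := {t | Step a n s c t}
  start := {.inl 0, .inr (.inr false)}
  accept := {s | s.isLeft ∨ s = .inr (.inl (Fin.last n)) ∨ s = .inr (.inr true)}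

def Reached : State n → List α → Prop
  | .inl i, w => (i : ℕ) = w.length
  | .inr (.inl j), w => ∃ p, p + j + 1 = w.length ∧ (p ≤ n ∨ w[p]? ≠ some a)
  | .inr (.inr false), _ => True
  | .inr (.inr true), w => n < w.length ∧ w[n]? ≠ some a

variable {a n}

theorem card_state : Fintype.card (State n) = 2 * n + 4 := by
  simp only [Fintype.card_sum, Fintype.card_fin, Fintype.card_bool]
  ring

theorem reached_append_singleton_iff (w : List α) (c : α) (s : State n) :
    Reached a n s (w ++ [c]) ↔ ∃ t, Reached a n t w ∧ Step a n t c s := by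
  rcases s with i | ⟨_ | j, hj⟩ | _ | _
  · simp only [Reached, List.length_append, List.length_cons, List.length_nil, zero_add, ne_eq,
      Step, Sum.exists, Fin.exists_iff, Order.lt_add_one_iff, exists_and_left, exists_prop,
      exists_eq_left, and_false, exists_const, or_false, iff_and_self]
    omega
  · simp [Reached, Step, Fin.exists_iff]
  · simp only [Reached, List.length_append, List.length_cons, List.length_nil, zero_add,
      Nat.add_right_cancel_iff, ne_eq, Step, Sum.exists, Fin.mk_eq_zero, Nat.add_eq_zero_iff,
      one_ne_zero, and_false, exists_const, Fin.exists_iff, Order.lt_add_one_iff, exists_and_left,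
      exists_prop, exists_eq_right_right', Bool.exists_bool, false_and, or_self, or_false, false_or]
    constructor
    · rintro ⟨p, hp, h⟩
      exact ⟨⟨p, by omega, by rwa [List.getElem?_append_left (by omega)] at h⟩, by omega⟩
    · rintro ⟨⟨p, hp, h⟩, -⟩
      exact ⟨p, by omega, by rwa [List.getElem?_append_left (by omega)]⟩
  · simp [Reached, Step]
  · rcases lt_trichotomy n w.length with h | rfl | h
    · simp [Reached, Step, Fin.exists_iff, h, h.le, h.ne']
    · simp [Reached, Step, Fin.exists_iff]
    · simp [Reached, Step, Fin.exists_iff, h.ne, h.not_ge, h.not_gt]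

theorem mem_eval_iff (w : List α) (s : State n) :
    s ∈ (nfa a n).eval w ↔ Reached a n s w := by
  induction w using List.reverseRecOn generalizing s with
  | nil => rcases s with i | j | _ | _ <;> simp [nfa, Reached]
  | append_singleton w c ih =>
    simp only [NFA.eval_append_singleton, NFA.mem_stepSet, ih, reached_append_singleton_iff]
    rfl

theorem mem_accepts_iff (w : List α) :
    w ∈ (nfa a n).accepts ↔ w.length ≤ n ∨
      (∃ p, p + n + 1 = w.length ∧ (p ≤ n ∨ w[p]? ≠ some a)) ∨ (n < w.length ∧ w[n]? ≠ some a) := by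
  change (∃ s ∈ _, s ∈ (nfa a n).eval w) ↔ _
  simp only [mem_eval_iff]
  simp [nfa, Reached, Fin.exists_iff]

theorem mem_language_iff_exists_append (w : List α) :
    w ∈ language a n ↔ ∃ u v x, u.length = n ∧ x.length = n ∧ w = u ++ a :: v ++ a :: x := by
  constructor
  · rintro ⟨_, ⟨_, ⟨_, ⟨u, hu, _, rfl, rfl⟩, v, -, rfl⟩, _, rfl, rfl⟩, x, hx, rfl⟩
    exact ⟨u, v, x, hu, hx, by simp⟩
  · rintro ⟨u, v, x, hu, hx, rfl⟩
    exact ⟨_, ⟨_, ⟨_, ⟨u, hu, [a], rfl, rfl⟩, v, trivial, rfl⟩, [a], rfl, rfl⟩, x, hx, by simp⟩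

theorem mem_language_iff (w : List α) :
    w ∈ language a n ↔
      2 * n + 1 < w.length ∧ w[n]? = some a ∧ w[w.length - (n + 1)]? = some a := by
  rw [mem_language_iff_exists_append]
  constructor
  · rintro ⟨u, v, x, hu, hx, rfl⟩
    refine ⟨by simp; omega, by simp [hu], ?_⟩
    rw [List.getElem?_append_right (by simp; omega), Nat.sub_eq_zero_of_le (by simp; omega)]
    rfl
  · rintro ⟨hlen, hn, hm⟩
    set m := w.length - (2 * n + 2)
    have hy : (w.drop (n + 1))[m]? = some a := by
      rw [List.getElem?_drop, ← hm]
      congr 1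
      omega
    have hw := List.eq_take_append_cons_drop_of_getElem?_eq_some hn
    rw [List.eq_take_append_cons_drop_of_getElem?_eq_some hy] at hw
    refine ⟨w.take n, (w.drop (n + 1)).take m, (w.drop (n + 1)).drop (m + 1), ?_, ?_,
      by simpa using hw⟩ <;> simp [m] <;> omega

theorem notMem_language_iff (w : List α) :
    w ∉ language a n ↔ w.length ≤ n ∨
      (∃ p, p + n + 1 = w.length ∧ (p ≤ n ∨ w[p]? ≠ some a)) ∨ (n < w.length ∧ w[n]? ≠ some a) := by
  rw [mem_language_iff]
  constructor
  · intro h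
    rcases le_or_gt w.length n with hlen | hlen
    · exact .inl hlen
    by_cases hn : w[n]? = some a
    · refine .inr (.inl ⟨w.length - (n + 1), by omega, ?_⟩)
      by_contra! hm
      exact h ⟨by omega, hn, hm.2⟩
    · exact .inr (.inr ⟨hlen, hn⟩)
  · rintro (h | ⟨p, hp, hp' | hp'⟩ | ⟨-, h⟩) ⟨hlen, hn, hm⟩
    · omega
    · omega
    · obtain rfl : p = w.length - (n + 1) := by omega
      exact hp' hm
    · exact h hn

theorem accepts_nfa : (nfa a n).accepts = (language a n)ᶜ := by
  ext w
  exact (mem_accepts_iff w).trans (notMem_language_iff w).symm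

end SeqComplement

/-- Section 4.1 of the paper: for every `n` there is an NFA over the
two-letter alphabet `{a, b}` (modeled by `Bool`, with `a = true`) with at most
`2n + 4` states accepting the complement
`{a, b}* ∖ ({a, b}ⁿ · {a} · {a, b}* · {a} · {a, b}ⁿ)`. -/
theorem exists_small_nfa_complement_seq_family (n : ℕ) :
    ∃ (σ : Type) (inst : Fintype σ) (M : NFA Bool σ),
      @Fintype.card σ inst ≤ 2 * n + 4 ∧
      M.accepts = (lenLang Bool n * {[true]} * ⊤ * {[true]} * lenLang Bool n)ᶜ :=
  ⟨_, inferInstance, SeqComplement.nfa true n, SeqComplement.card_state.le,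
    SeqComplement.accepts_nfa⟩
end

section
/- Fix n ∈ ℕ and let L = {a, b}ⁿ · {a} · {a, b}* · {a} · {a, b}ⁿ over the two-letter alphabet {a, b}. Then every DFA whose language is {a, b}* ∖ L has at least 2^{n+1} states. -/
namespace NFA

variable {α σ : Type*} (M : NFA α σ)

theorem leftQuotient_accepts_s9 (x : List α) :
    M.accepts.leftQuotient x = M.acceptsFrom (M.eval x) := by
  ext y
  exact M.append_mem_acceptsFrom

theorem acceptsFrom_empty : M.acceptsFrom ∅ = 0 := by
  ext x
  rw [mem_acceptsFrom, evalFrom_eq_biUnion_singleton]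
  simp

theorem evalFrom_subsingleton (hM : ∀ q a, (M.step q a).Subsingleton) {S : Set σ}
    (hS : S.Subsingleton) (x : List α) : (M.evalFrom S x).Subsingleton := by
  induction x generalizing S with
  | nil => exact hS
  | cons a x ih =>
    refine ih fun q hq q' hq' => ?_
    obtain ⟨p, hp, hq⟩ := M.mem_stepSet.mp hq
    obtain ⟨p', hp', hq'⟩ := M.mem_stepSet.mp hq'
    obtain rfl := hS hp hp'
    exact hM p a hq hq'

end NFA

namespace IsPartialDFA

variable {α σ ι : Type*} {M : NFA α σ}

theorem eval_subsingleton_s9 (hM : IsPartialDFA M) (x : List α) : (M.eval x).Subsingleton := by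
  obtain ⟨⟨q, hq⟩, hstep⟩ := hM
  exact M.evalFrom_subsingleton hstep (hq ▸ Set.subsingleton_singleton) x

theorem card_le_of_injective_leftQuotient_s9 [Fintype σ] [Fintype ι] (hM : IsPartialDFA M)
    (x : ι → List α) (hx : ∀ i, ∃ z, x i ++ z ∈ M.accepts)
    (hinj : Function.Injective fun i => M.accepts.leftQuotient (x i)) :
    Fintype.card ι ≤ Fintype.card σ := by
  have hne (i : ι) : (M.eval (x i)).Nonempty := by
    obtain ⟨z, hz⟩ := hx i
    rw [Set.nonempty_iff_ne_empty]
    intro h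
    rw [← Language.mem_leftQuotient, M.leftQuotient_accepts_s9, h, M.acceptsFrom_empty] at hz
    exact hz
  choose q hq using hne
  refine Fintype.card_le_of_injective q fun i j hij => hinj ?_
  simp only [M.leftQuotient_accepts_s9, (hM.eval_subsingleton_s9 _).eq_singleton_of_mem (hq _), hij]

end IsPartialDFA

section MarkedLang

variable {n : ℕ}

def markedLang (n : ℕ) : Language Bool :=
  lenLang Bool n * {[true]} * ⊤ * {[true]} * lenLang Bool n

theorem mem_markedLang_iff {w : List Bool} :
    w ∈ markedLang n ↔
      ∃ x y z : List Bool, x.length = n ∧ z.length = n ∧ x ++ true :: (y ++ true :: z) = w := by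
  have h_len (x : List Bool) : x ∈ lenLang Bool n ↔ x.length = n := Iff.rfl
  have h_single (x : List Bool) : x ∈ ({[true]} : Language Bool) ↔ x = [true] := Iff.rfl
  have h_top (x : List Bool) : x ∈ (⊤ : Language Bool) := trivial
  simp [markedLang, Language.mem_mul, h_len, h_single, h_top]

theorem getElem?_length_sub_of_mem_markedLang {w : List Bool} (h : w ∈ markedLang n) :
    w[w.length - (n + 1)]? = some true := by
  obtain ⟨x, y, z, -, hz, rfl⟩ := mem_markedLang_iff.mp h
  have hidx : (x ++ true :: (y ++ true :: z)).length - (n + 1) = (x ++ true :: y).length := by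
    simp; omega
  have hw : x ++ true :: (y ++ true :: z) = (x ++ true :: y) ++ true :: z := by simp
  rw [hidx, hw, List.getElem?_append_right le_rfl, Nat.sub_self]
  rfl

def foolingWord (n : ℕ) (u : Fin (n + 1) → Bool) : List Bool :=
  List.replicate (n + 1) true ++ List.ofFn u

theorem getElem?_foolingWord_append_replicate (u : Fin (n + 1) → Bool) (j : ℕ) :
    let w := foolingWord n u ++ List.replicate j false
    w[w.length - (n + 1)]? = (List.ofFn u ++ List.replicate j false)[j]? := by
  simp only [foolingWord, List.append_assoc]
  rw [List.getElem?_append_right] <;> simp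

theorem foolingWord_append_replicate_mem_markedLang_iff (u : Fin (n + 1) → Bool)
    (j : Fin (n + 1)) :
    foolingWord n u ++ List.replicate j false ∈ markedLang n ↔ u j = true := by
  have hj : (j : ℕ) < (List.ofFn u).length := by rw [List.length_ofFn]; exact j.isLt
  constructor
  · intro h
    have h_last := getElem?_length_sub_of_mem_markedLang h
    rw [getElem?_foolingWord_append_replicate, List.getElem?_append_left hj,
      List.getElem?_ofFn] at h_last
    simpa [Fin.is_le] using h_last
  · intro h
    refine mem_markedLang_iff.mpr ⟨List.replicate n true, (List.ofFn u).take j,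
      (List.ofFn u).drop (j + 1) ++ List.replicate j false, by simp, by simp; omega, ?_⟩
    have h' : (List.ofFn u)[(j : ℕ)] = true := by rw [List.getElem_ofFn]; exact h
    calc _ = List.replicate (n + 1) true ++
          ((List.ofFn u).take j ++ (List.ofFn u)[(j : ℕ)] :: (List.ofFn u).drop (j + 1))
            ++ List.replicate j false := by simp only [List.replicate_succ', h']; simp
      _ = _ := by rw [← List.drop_eq_getElem_cons, List.take_append_drop, foolingWord]

theorem foolingWord_append_replicate_not_mem_markedLang (u : Fin (n + 1) → Bool) :
    foolingWord n u ++ List.replicate (n + 1) false ∉ markedLang n := by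
  intro h
  have h_last := getElem?_length_sub_of_mem_markedLang h
  rw [getElem?_foolingWord_append_replicate, List.getElem?_append_right (by simp)] at h_last
  simp at h_last

theorem leftQuotient_compl_markedLang_foolingWord_injective (n : ℕ) :
    Function.Injective fun u => (markedLang n)ᶜ.leftQuotient (foolingWord n u) := by
  intro u v huv
  funext j
  have h_quot := congrArg (List.replicate j false ∈ ·) huv
  simp only [Language.mem_leftQuotient] at h_quot
  rw [Bool.eq_iff_iff, ← foolingWord_append_replicate_mem_markedLang_iff,
    ← foolingWord_append_replicate_mem_markedLang_iff]
  exact not_iff_not.mp (Iff.of_eq h_quot)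

end MarkedLang

/-- The exponential blow-up claim of Section 4.1: every DFA for the complement
of `L = {a, b}ⁿ · {a} · {a, b}* · {a} · {a, b}ⁿ` has at least `2^(n+1)`
states.  The alphabet `{a, b}` is modeled by `Bool` with `a = true`. -/
theorem dfa_complement_seq_family_lower_bound (n : ℕ) :
    ∀ (σ : Type) [Fintype σ] (M : NFA Bool σ), IsPartialDFA M →
      M.accepts = (lenLang Bool n * {[true]} * ⊤ * {[true]} * lenLang Bool n)ᶜ →
      2 ^ (n + 1) ≤ Fintype.card σ := by
  intro σ _ M hM hacc
  change M.accepts = (markedLang n)ᶜ at hacc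
  have h_pad (u : Fin (n + 1) → Bool) :
      foolingWord n u ++ List.replicate (n + 1) false ∈ M.accepts :=
    hacc ▸ foolingWord_append_replicate_not_mem_markedLang u
  have h_sep : Function.Injective fun u => M.accepts.leftQuotient (foolingWord n u) :=
    hacc ▸ leftQuotient_compl_markedLang_foolingWord_injective n
  simpa using hM.card_le_of_injective_leftQuotient_s9 (foolingWord n) (fun u => ⟨_, h_pad u⟩) h_sep
end

section
/- For every n ∈ ℕ there exists an NFA over the three-letter alphabet {a, b, c} with exactly 2n + 4 states whose language is {a, b}* · {a} · {a, b}ⁿ · {c} · {a, b}ⁿ · {a} · {a, b}*. -/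
/-- The language `{a, b}*` of words over the three-letter alphabet
`{a, b, c}` (modeled by `Fin 3` with `a = 0`, `b = 1`, `c = 2`) containing no
occurrence of `c`. -/
def abStar : Language (Fin 3) := {w | ∀ x ∈ w, x ≠ 2}

/-- The language `{a, b}ⁿ` of words of length `n` over `{a, b, c}` containing
no occurrence of `c`. -/
def abLen (n : ℕ) : Language (Fin 3) := {w | w.length = n ∧ ∀ x ∈ w, x ≠ 2}

/-! The automaton is the chain `0 → 1 → ⋯ → 2n+3` whose edge out of state `i` reads `a` for
`i = 0, 2n+2`, reads `c` for `i = n+1` and reads `a` or `b` otherwise, with `{a, b}`-loops on the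
first and the last state. The language accepted from a state is the letter of its outgoing edge
times the language accepted from the next state, starred on the left by its loop letters (Arden's
lemma); unwinding this equation along the chain gives the seven factors of the target language. -/

open Computability

namespace Language

variable {α : Type*}

def letters (A : Set α) : Language α := {w | ∃ a ∈ A, w = [a]}

variable {A : Set α} {l : Language α} {w : List α}

theorem mem_letters : w ∈ letters A ↔ ∃ a ∈ A, w = [a] := Iff.rfl

theorem nil_notMem_letters : [] ∉ letters A := by
  simp [mem_letters]

theorem nil_notMem_letters_mul : [] ∉ letters A * l := by
  simp [mem_mul, mem_letters]

theorem cons_mem_letters_mul {a : α} : a :: w ∈ letters A * l ↔ a ∈ A ∧ w ∈ l := by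
  simp [mem_mul, mem_letters]

theorem letters_empty : letters (∅ : Set α) = 0 := by
  ext w
  simp [mem_letters, notMem_zero]

theorem letters_singleton (a : α) : letters {a} = {[a]} := by
  ext w
  simp [mem_letters]
  rfl

theorem mem_letters_pow {n : ℕ} :
    w ∈ letters A ^ n ↔ w.length = n ∧ ∀ x ∈ w, x ∈ A := by
  induction n generalizing w with
  | zero => cases w <;> simp [mem_one]
  | succ n ih =>
    cases w with
    | nil => simp [pow_succ', nil_notMem_letters_mul]
    | cons a w => simp [pow_succ', cons_mem_letters_mul, ih, and_left_comm]

theorem mem_kstar_letters : w ∈ (letters A)∗ ↔ ∀ x ∈ w, x ∈ A := by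
  constructor
  · rintro ⟨L, rfl, hL⟩ x hx
    obtain ⟨y, hy, hxy⟩ := List.mem_flatten.mp hx
    obtain ⟨a, ha, rfl⟩ := hL y hy
    rwa [List.mem_singleton.mp hxy]
  · intro hw
    refine ⟨w.map ([·]), (List.flatMap_singleton' w).symm, ?_⟩
    simpa [mem_letters] using hw

end Language

open Language

namespace NFA

variable {α σ : Type*} (M : NFA α σ) {S S' : Set σ} {A B : Set α}

theorem mem_acceptsFrom_sep {p : Prop} {w : List α} :
    w ∈ M.acceptsFrom {t ∈ S | p} ↔ p ∧ w ∈ M.acceptsFrom S := by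
  simp only [mem_acceptsFrom, mem_evalFrom_iff_exists (S := {t ∈ S | p}),
    mem_evalFrom_iff_exists (S := S)]
  grind

theorem acceptsFrom_eq_kstar_mul (hS : ∀ s ∈ S, s ∉ M.accept)
    (hstep : ∀ a, M.stepSet S a = {t ∈ S | a ∈ A} ∪ {t ∈ S' | a ∈ B}) :
    M.acceptsFrom S = (letters A)∗ * (letters B * M.acceptsFrom S') := by
  rw [← self_eq_mul_add_iff nil_notMem_letters]
  ext (_ | ⟨a, w⟩) <;> rw [mem_add]
  · simpa [nil_notMem_letters_mul] using hS
  · rw [cons_mem_acceptsFrom, hstep, acceptsFrom_union, mem_add, cons_mem_letters_mul,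
      cons_mem_letters_mul, M.mem_acceptsFrom_sep, M.mem_acceptsFrom_sep]

theorem acceptsFrom_eq_kstar (hS : ∀ s ∈ S, s ∈ M.accept) (hne : S.Nonempty)
    (hstep : ∀ a, M.stepSet S a = {t ∈ S | a ∈ A}) :
    M.acceptsFrom S = (letters A)∗ := by
  rw [← mul_one (letters A)∗, ← self_eq_mul_add_iff nil_notMem_letters]
  ext (_ | ⟨a, w⟩) <;> rw [mem_add, mem_one]
  · obtain ⟨s, hs⟩ := hne
    simpa [nil_notMem_letters_mul] using ⟨s, hs, hS s hs⟩
  · rw [cons_mem_acceptsFrom, hstep, cons_mem_letters_mul, M.mem_acceptsFrom_sep]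
    simp

end NFA

theorem eq_pow_mul_of_forall_eq_mul {M : Type*} [Monoid M] {f : ℕ → M} {a : M} {m k : ℕ}
    (h : ∀ i, m ≤ i → i < m + k → f i = a * f (i + 1)) : f m = a ^ k * f (m + k) := by
  induction k generalizing m with
  | zero => simp
  | succ k ih =>
    rw [h m le_rfl (by omega), ih fun i hi hik => h i (by omega) (by omega), ← mul_assoc,
      ← pow_succ', Nat.add_right_comm, Nat.add_assoc]

def gateLoop (n i : ℕ) : Set (Fin 3) := if i = 0 ∨ i = 2 * n + 3 then {a | a ≠ 2} else ∅

def gateEdge (n i : ℕ) : Set (Fin 3) :=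
  if i = 0 ∨ i = 2 * n + 2 then {0} else if i = n + 1 then {2} else {a | a ≠ 2}

def gateNFA (n : ℕ) : NFA (Fin 3) (Fin (2 * n + 4)) where
  step q a := {p | (p = q ∧ a ∈ gateLoop n q) ∨ (p.val = q.val + 1 ∧ a ∈ gateEdge n q)}
  start := Fin.val ⁻¹' {0}
  accept := Fin.val ⁻¹' {2 * n + 3}

-- Indexing states through `Fin.val ⁻¹' {i}` avoids `Fin` arithmetic; for `i > 2n+3` the set
-- is empty.
def gateFrom (n i : ℕ) : Language (Fin 3) := (gateNFA n).acceptsFrom (Fin.val ⁻¹' {i})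

theorem gateNFA_stepSet (n i : ℕ) (a : Fin 3) :
    (gateNFA n).stepSet (Fin.val ⁻¹' {i}) a =
      {q ∈ Fin.val ⁻¹' {i} | a ∈ gateLoop n i} ∪
        {q ∈ Fin.val ⁻¹' {i + 1} | a ∈ gateEdge n i} := by
  ext p
  simp only [NFA.stepSet, gateNFA, Set.mem_iUnion, Set.mem_preimage, Set.mem_singleton_iff,
    Set.mem_union, Set.mem_ofPred_eq, exists_prop]
  constructor
  · rintro ⟨q, rfl, ⟨rfl, ha⟩ | ⟨hp, ha⟩⟩
    exacts [Or.inl ⟨rfl, ha⟩, Or.inr ⟨hp, ha⟩]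
  · rintro (⟨hp, ha⟩ | ⟨hp, ha⟩)
    · exact ⟨p, hp, Or.inl ⟨rfl, hp ▸ ha⟩⟩
    · exact ⟨⟨i, by omega⟩, rfl, Or.inr ⟨hp, ha⟩⟩

theorem gateFrom_eq_kstar_mul {n i : ℕ} (hi : i ≠ 2 * n + 3) :
    gateFrom n i = (letters (gateLoop n i))∗ * (letters (gateEdge n i) * gateFrom n (i + 1)) :=
  NFA.acceptsFrom_eq_kstar_mul _ (fun _ hs hacc => hi (hs.symm.trans hacc)) (gateNFA_stepSet n i)

theorem gateFrom_eq_letters_mul {n i : ℕ} (h₀ : i ≠ 0) (hi : i < 2 * n + 3) :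
    gateFrom n i = letters (gateEdge n i) * gateFrom n (i + 1) := by
  rw [gateFrom_eq_kstar_mul hi.ne, gateLoop, if_neg (by omega), letters_empty, kstar_zero,
    one_mul]

theorem gateFrom_eq_pow_mul {n m k : ℕ} (h₀ : m ≠ 0) (hk : m + k ≤ 2 * n + 2)
    (hc : m + k ≤ n + 1 ∨ n + 1 < m) :
    gateFrom n m = letters {a | a ≠ 2} ^ k * gateFrom n (m + k) :=
  eq_pow_mul_of_forall_eq_mul fun i hmi hik => by
    rw [gateFrom_eq_letters_mul (by omega) (by omega), gateEdge, if_neg (by omega),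
      if_neg (by omega)]

theorem gateFrom_last (n : ℕ) : gateFrom n (2 * n + 3) = (letters {a | a ≠ 2})∗ := by
  refine NFA.acceptsFrom_eq_kstar _ (fun _ hs => hs) ⟨Fin.last _, rfl⟩ fun a => ?_
  rw [gateNFA_stepSet, gateLoop, if_pos (Or.inr rfl)]
  ext q
  simp only [Set.mem_union, Set.mem_ofPred_eq, Set.mem_preimage, Set.mem_singleton_iff]
  omega

theorem gateFrom_zero (n : ℕ) :
    gateFrom n 0 = (letters {a | a ≠ 2})∗ * (letters {0} * (letters {a | a ≠ 2} ^ n *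
      (letters {2} * (letters {a | a ≠ 2} ^ n *
        (letters {0} * (letters {a | a ≠ 2})∗))))) := by
  have h₀ : gateFrom n 0 = (letters {a | a ≠ 2})∗ * (letters {0} * gateFrom n 1) := by
    rw [gateFrom_eq_kstar_mul (by omega), gateLoop, gateEdge, if_pos (by omega), if_pos (by omega)]
  have h₁ : gateFrom n 1 = letters {a | a ≠ 2} ^ n * gateFrom n (n + 1) := by
    rw [gateFrom_eq_pow_mul (k := n) one_ne_zero (by omega) (by omega), add_comm]
  have h₂ : gateFrom n (n + 1) = letters {2} * gateFrom n (n + 2) := by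
    rw [gateFrom_eq_letters_mul (by omega) (by omega), gateEdge, if_neg (by omega), if_pos rfl]
  have h₃ : gateFrom n (n + 2) = letters {a | a ≠ 2} ^ n * gateFrom n (2 * n + 2) := by
    rw [gateFrom_eq_pow_mul (k := n) (by omega) (by omega) (by omega),
      show n + 2 + n = 2 * n + 2 by omega]
  have h₄ : gateFrom n (2 * n + 2) = letters {0} * gateFrom n (2 * n + 3) := by
    rw [gateFrom_eq_letters_mul (by omega) (by omega), gateEdge, if_pos (by omega)]
  rw [h₀, h₁, h₂, h₃, h₄, gateFrom_last]

/-- The gate family of Section 4.2: for every `n` there is an NFA over the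
three-letter alphabet `{a, b, c}` (modeled by `Fin 3` with `a = 0`, `b = 1`,
`c = 2`) with exactly `2n + 4` states accepting
`{a, b}* · {a} · {a, b}ⁿ · {c} · {a, b}ⁿ · {a} · {a, b}*`. -/
theorem exists_nfa_gate_family (n : ℕ) :
    ∃ M : NFA (Fin 3) (Fin (2 * n + 4)),
      M.accepts = abStar * {[0]} * abLen n * {[2]} * abLen n * {[0]} * abStar := by
  have hstar : abStar = (letters {a | a ≠ 2})∗ := by ext w; exact mem_kstar_letters.symm
  have hlen : abLen n = letters {a | a ≠ 2} ^ n := by ext w; exact mem_letters_pow.symm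
  refine ⟨gateNFA n, ?_⟩
  rw [hstar, hlen, ← letters_singleton, ← letters_singleton]
  simp only [mul_assoc]
  exact gateFrom_zero n
end

section
/- Let Σ be a finite alphabet, c ∈ Σ, A₁' = (Q₁', Σ, δ₁', {q₀'}, F₁') a complete DFA and C₂ = (Q̂₂, Σ, δ̂₂, Î₂, F̂₂) an NFA, and let C be the NFA of the basic sequential complementation construction built from A₁' and C₂ (states Q₁' × 2^{Q̂₂}, initial state (q₀', ∅), accepting states Q₁' × 2^{F̂₂}, transitions (p, R) →a (q, S) with q = δ₁'(p, a) and S the image of a choice of δ̂₂-a-successors of R, augmented by one state of Î₂ whenever p ∈ F₁' and a = c). If for every p ∈ F₁' no state of F₁' is reachable in A₁' from the state δ₁'(p, c) (including δ₁'(p, c) itself), then every state (q, R) of C reachable from the initial state satisfies |R| ≤ 1. -/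
/-!
While the tracked `A₁`-state can still reach acceptance, no instance of `C₂` is alive: the
only transition that spawns one leaves an accepting state by `c`, and by hypothesis `A₁` can never
accept again afterwards, so no second instance is ever spawned. Tracking instances by a choice
function `f` cannot increase their number.
-/

namespace DFA

variable {α σ : Type*} {M : DFA α σ} {s : σ}

theorem acceptsFrom_eq_zero_iff : M.acceptsFrom s = 0 ↔ ∀ w, M.evalFrom s w ∉ M.accept :=
  Set.eq_empty_iff_forall_notMem

theorem notMem_accept_of_acceptsFrom_eq_zero (h : M.acceptsFrom s = 0) : s ∉ M.accept :=
  acceptsFrom_eq_zero_iff.mp h []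

theorem acceptsFrom_step_eq_zero (h : M.acceptsFrom s = 0) (a : α) :
    M.acceptsFrom (M.step s a) = 0 :=
  acceptsFrom_eq_zero_iff.mpr fun w => acceptsFrom_eq_zero_iff.mp h (a :: w)

end DFA

namespace NFA

variable {α σ : Type*} (M : NFA α σ) {S T : Set σ}

theorem evalFrom_subset_of_step_subset (hS : ∀ s ∈ S, ∀ a, M.step s a ⊆ S) (hT : T ⊆ S)
    (w : List α) : M.evalFrom T w ⊆ S := by
  induction w generalizing T with
  | nil => exact hT
  | cons a w ih =>
    rw [evalFrom_cons]
    exact ih (Set.iUnion₂_subset fun s hs => hS s (hT hs) a)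

theorem eval_subset_of_step_subset (hstart : M.start ⊆ S)
    (hS : ∀ s ∈ S, ∀ a, M.step s a ⊆ S) (w : List α) : M.eval w ⊆ S :=
  M.evalFrom_subset_of_step_subset hS hstart w

end NFA

section SeqCompl

variable {α σ₁ σ₂ : Type*} (A₁ : DFA α σ₁)

def seqComplInvariant : Set (σ₁ × Set σ₂) :=
  {pr | pr.2.Subsingleton ∧ (pr.2.Nonempty → A₁.acceptsFrom pr.1 = 0)}

theorem seqCompl_start_subset_invariant (c : α) (C₂ : NFA α σ₂) :
    (seqCompl c A₁ C₂).start ⊆ seqComplInvariant A₁ := by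
  rintro _ rfl
  exact ⟨Set.subsingleton_empty, fun h => absurd h Set.not_nonempty_empty⟩

theorem seqCompl_step_subset_invariant {c : α} (C₂ : NFA α σ₂)
    (hdead : ∀ p ∈ A₁.accept, A₁.acceptsFrom (A₁.step p c) = 0) :
    ∀ pr ∈ seqComplInvariant A₁, ∀ a,
      (seqCompl c A₁ C₂).step pr a ⊆ seqComplInvariant A₁ := by
  rintro ⟨p, R⟩ ⟨hsub, hlive⟩ a ⟨q, R'⟩ ⟨rfl, hstep⟩
  rcases hstep with ⟨-, f, -, rfl⟩ | ⟨hp, rfl, f, -, s₀, -, rfl⟩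
  · exact ⟨hsub.image f, fun hne => DFA.acceptsFrom_step_eq_zero (hlive hne.of_image) a⟩
  · have hR : R = ∅ := Set.not_nonempty_iff_eq_empty.mp fun hne =>
      DFA.notMem_accept_of_acceptsFrom_eq_zero (hlive hne) hp
    subst hR
    rw [Set.image_empty, Set.empty_union]
    exact ⟨Set.subsingleton_singleton, fun _ => hdead p hp⟩

end SeqCompl

theorem seqCompl_reachable_subsingleton_general {α σ₁ σ₂ : Type*}
    (c : α) (A₁ : DFA α σ₁) (C₂ : NFA α σ₂)
    (hcond : ∀ p ∈ A₁.accept, ∀ w : List α, A₁.evalFrom (A₁.step p c) w ∉ A₁.accept) :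
    ∀ pr : σ₁ × Set σ₂,
      (∃ w : List α, pr ∈ (seqCompl c A₁ C₂).eval w) → pr.2.Subsingleton := by
  rintro pr ⟨w, hw⟩
  have hdead p hp : A₁.acceptsFrom (A₁.step p c) = 0 :=
    DFA.acceptsFrom_eq_zero_iff.mpr (hcond p hp)
  have hinv : (seqCompl c A₁ C₂).eval w ⊆ seqComplInvariant A₁ :=
    (seqCompl c A₁ C₂).eval_subset_of_step_subset (seqCompl_start_subset_invariant A₁ c C₂)
      (seqCompl_step_subset_invariant A₁ C₂ hdead) w
  exact (hinv hw).1

/-- Sufficient condition of Appendix D (single-transfer-transition setting):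
if for every accepting state `p` of the complete DFA `A₁` no accepting state
of `A₁` is reachable from `δ₁'(p, c)` (including `δ₁'(p, c)` itself), then
every reachable state `(q, R)` of the sequential complement satisfies
`|R| ≤ 1`. -/
theorem seqCompl_reachable_subsingleton {α σ₁ σ₂ : Type*}
    [Fintype α] [Fintype σ₁] [Fintype σ₂]
    (c : α) (A₁ : DFA α σ₁) (C₂ : NFA α σ₂)
    (hcond : ∀ p ∈ A₁.accept, ∀ w : List α, A₁.evalFrom (A₁.step p c) w ∉ A₁.accept) :
    ∀ pr : σ₁ × Set σ₂,
      (∃ w : List α, pr ∈ (seqCompl c A₁ C₂).eval w) → pr.2.Subsingleton :=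
  seqCompl_reachable_subsingleton_general c A₁ C₂ hcond
end

section
/- Let A = (Q, Σ, δ, I, F) be an NFA whose state set is partitioned as Q = Q₁ ⊎ Q₂ such that δ contains no transition from Q₂ to Q₁. Assume the front component A₁ = (Q₁, Σ, δ ∩ (Q₁ × Σ × Q₁), I ∩ Q₁, F ∩ Q₁) is a complete DFA with initial state q₀ (so I ∩ Q₁ = {q₀} and each state of Q₁ has exactly one a-successor inside Q₁ for each a ∈ Σ). Suppose we are given a finite set Q̂₂, a transition relation δ̂₂ ⊆ Q̂₂ × Σ × Q̂₂, a set F̂₂ ⊆ Q̂₂, a set Î₀ ⊆ Q̂₂, and for each p ∈ Q₂ a set Î_p ⊆ Q̂₂, such that the NFA (Q̂₂, Σ, δ̂₂, Î₀, F̂₂) accepts Σ* ∖ L((Q₂, Σ, δ ∩ (Q₂ × Σ × Q₂), I ∩ Q₂, F ∩ Q₂)) and, for every p ∈ Q₂, the NFA (Q̂₂, Σ, δ̂₂, Î_p, F̂₂) accepts Σ* ∖ L((Q₂, Σ, δ ∩ (Q₂ × Σ × Q₂), {p}, F ∩ Q₂)). Define the NFA C with states Q₁ × 2^{Q̂₂};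 initial states {(q₀, ∅)} if I ∩ Q₂ = ∅ and {(q₀, {r}) : r ∈ Î₀} otherwise; accepting states {(q, R) : q ∉ F and R ⊆ F̂₂}; and transitions (q, R) →a (q', R') exactly when q' is the unique a-successor of q inside Q₁, and R' = f(R) ∪ T where f : R → Q̂₂ is any function with f(r) ∈ δ̂₂(r, a) for every r ∈ R, and T contains exactly one element t_p ∈ Î_p for each p ∈ Q₂ with (q, a, p) ∈ δ (and nothing else). Then L(C) = Σ* ∖ L(A). -/
/-- The rear component of an NFA `A` whose states are partitioned as
`σ₁ ⊕ σ₂`: the restriction of `A` to the rear states `σ₂`, with the given set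
`S` of initial states. -/
def rearComponent {α σ₁ σ₂ : Type*} (A : NFA α (σ₁ ⊕ σ₂)) (S : Set σ₂) :
    NFA α σ₂ where
  step := fun p a => {r | Sum.inr r ∈ A.step (Sum.inr p) a}
  start := S
  accept := {p | Sum.inr p ∈ A.accept}

/-- The set of rear states entered from front state `q` by reading `a`
(targets of transfer transitions). -/
def transferTargets {α σ₁ σ₂ : Type*} (A : NFA α (σ₁ ⊕ σ₂)) (q : σ₁) (a : α) :
    Set σ₂ := {p | Sum.inr p ∈ A.step (Sum.inl q) a}

/-- The generalized sequential complementation construction (Appendix B,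
single slice): `d` is the transition function of the front component (a
complete DFA with initial state `q₀`), `δ̂₂`, `F̂₂` are the transitions and
accepting states of the complement automaton of the rear component, `Î₀` its
initial states for the complement of the rear component started from the rear
initial states of `A`, and `Î p` its initial states for the complement of the
rear component started from the entry port `p`. -/
def genSeqCompl {α σ₁ σ₂ τ : Type*} (A : NFA α (σ₁ ⊕ σ₂))
    (q₀ : σ₁) (d : σ₁ → α → σ₁)
    (δ₂ : τ → α → Set τ) (F₂ : Set τ) (I₀ : Set τ) (I : σ₂ → Set τ) :
    NFA α (σ₁ × Set τ) where
  step := fun pr a =>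
    { qs | qs.1 = d pr.1 a ∧
        ∃ f : τ → τ, (∀ r ∈ pr.2, f r ∈ δ₂ r a) ∧
          ∃ t : σ₂ → τ, (∀ p ∈ transferTargets A pr.1 a, t p ∈ I p) ∧
            qs.2 = f '' pr.2 ∪ t '' transferTargets A pr.1 a }
  start :=
    { pr | ({p : σ₂ | Sum.inr p ∈ A.start} = ∅ ∧ pr = (q₀, ∅)) ∨
        ({p : σ₂ | Sum.inr p ∈ A.start} ≠ ∅ ∧ ∃ r ∈ I₀, pr = (q₀, {r})) }
  accept := {pr | Sum.inl pr.1 ∉ A.accept ∧ pr.2 ⊆ F₂}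

/-!
The state `(q, R)` of `genSeqCompl` should accept exactly the words `w` that `A` rejects from the
front state `q` and that the complement automaton accepts from every token `r ∈ R`. Reading `a`
from `q`, the automaton `A` either stays in the deterministic front component or enters the rear
component at a port `p`; as the rear component never returns, `a :: w` is rejected from `q` iff
`w` is rejected from `d q a` and from every such port `p`. The fresh tokens `t p ∈ I p` certify
the second condition, while the old tokens advance along `δ₂`. At the initial states this
language is `Σ* ∖ L(A)`.
-/

theorem NFA.mem_acceptsFrom_iff_exists {α σ : Type*} (M : NFA α σ) {S : Set σ} {w : List α} :
    w ∈ M.acceptsFrom S ↔ ∃ s ∈ S, w ∈ M.acceptsFrom {s} := by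
  simp only [NFA.mem_acceptsFrom, NFA.mem_evalFrom_iff_exists (S := S)]
  exact ⟨fun ⟨s, hs, t, ht, h⟩ => ⟨t, ht, s, hs, h⟩, fun ⟨t, ht, s, hs, h⟩ => ⟨s, hs, t, ht, h⟩⟩

theorem Set.exists_forall_mem_of_forall_mem_exists {α β : Type*} [Nonempty β] {s : Set α}
    {p : α → β → Prop} (h : ∀ x ∈ s, ∃ y, p x y) : ∃ f : α → β, ∀ x ∈ s, p x (f x) := by
  classical
  exact ⟨fun x => if hx : x ∈ s then (h x hx).choose else Classical.arbitrary β,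
    fun x hx => by simpa only [dif_pos hx] using (h x hx).choose_spec⟩

section Components
variable {α σ₁ σ₂ : Type*} {A : NFA α (σ₁ ⊕ σ₂)}

theorem mem_rearComponent_accepts_iff {S : Set σ₂} {w : List α} :
    w ∈ (rearComponent A S).accepts ↔ ∃ p ∈ S, w ∈ (rearComponent A {p}).accepts :=
  (rearComponent A S).mem_acceptsFrom_iff_exists

theorem stepSet_inr_image
    (hNoBack : ∀ (p : σ₂) (a : α) (q : σ₁), Sum.inl q ∉ A.step (Sum.inr p) a)
    (S₀ S : Set σ₂) (a : α) :
    A.stepSet (Sum.inr '' S) a = Sum.inr '' (rearComponent A S₀).stepSet S a := by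
  ext (q | r)
  · simpa [NFA.mem_stepSet] using fun p _ => hNoBack p a q
  · simp [NFA.mem_stepSet, rearComponent]

theorem rearComponent_acceptsFrom
    (hNoBack : ∀ (p : σ₂) (a : α) (q : σ₁), Sum.inl q ∉ A.step (Sum.inr p) a)
    (S₀ S : Set σ₂) : (rearComponent A S₀).acceptsFrom S = A.acceptsFrom (Sum.inr '' S) := by
  ext w
  induction w generalizing S with
  | nil => simp [rearComponent]
  | cons a w ih => rw [NFA.cons_mem_acceptsFrom, NFA.cons_mem_acceptsFrom, ih,
      stepSet_inr_image hNoBack S₀]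

theorem rearComponent_accepts
    (hNoBack : ∀ (p : σ₂) (a : α) (q : σ₁), Sum.inl q ∉ A.step (Sum.inr p) a) (S : Set σ₂) :
    (rearComponent A S).accepts = A.acceptsFrom (Sum.inr '' S) :=
  rearComponent_acceptsFrom hNoBack S S

theorem step_inl_eq {d : σ₁ → α → σ₁}
    (hd : ∀ (q : σ₁) (a : α) (r : σ₁), Sum.inl r ∈ A.step (Sum.inl q) a ↔ r = d q a)
    (q : σ₁) (a : α) :
    A.step (Sum.inl q) a = {Sum.inl (d q a)} ∪ Sum.inr '' transferTargets A q a := by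
  ext (r | p) <;> simp [hd, transferTargets]

theorem cons_mem_acceptsFrom_inl {d : σ₁ → α → σ₁}
    (hNoBack : ∀ (p : σ₂) (a : α) (q : σ₁), Sum.inl q ∉ A.step (Sum.inr p) a)
    (hd : ∀ (q : σ₁) (a : α) (r : σ₁), Sum.inl r ∈ A.step (Sum.inl q) a ↔ r = d q a)
    (q : σ₁) (a : α) (w : List α) :
    a :: w ∈ A.acceptsFrom {Sum.inl q} ↔
      w ∈ A.acceptsFrom {Sum.inl (d q a)} ∨
        w ∈ (rearComponent A (transferTargets A q a)).accepts := by
  rw [NFA.cons_mem_acceptsFrom, NFA.stepSet_singleton, step_inl_eq hd, NFA.acceptsFrom_union,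
    rearComponent_accepts hNoBack]
  rfl

theorem accepts_eq_add {q₀ : σ₁}
    (hNoBack : ∀ (p : σ₂) (a : α) (q : σ₁), Sum.inl q ∉ A.step (Sum.inr p) a)
    (hq₀ : ∀ q : σ₁, Sum.inl q ∈ A.start ↔ q = q₀) :
    A.accepts = A.acceptsFrom {Sum.inl q₀} +
      (rearComponent A {p | Sum.inr p ∈ A.start}).accepts := by
  have hstart : A.start = {Sum.inl q₀} ∪ Sum.inr '' {p | Sum.inr p ∈ A.start} := by
    ext (q | p) <;> simp [hq₀]
  rw [rearComponent_accepts hNoBack, ← NFA.acceptsFrom_union, ← hstart]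
  rfl

end Components

section Construction
variable {α σ₁ σ₂ τ : Type*} {A : NFA α (σ₁ ⊕ σ₂)} {q₀ : σ₁} {d : σ₁ → α → σ₁}
  {δ₂ : τ → α → Set τ} {F₂ I₀ : Set τ} {I : σ₂ → Set τ}

def genSeqComplFrom (A : NFA α (σ₁ ⊕ σ₂)) (δ₂ : τ → α → Set τ) (F₂ : Set τ) (q : σ₁)
    (R : Set τ) : Language α :=
  {w | w ∉ A.acceptsFrom {Sum.inl q} ∧ ∀ r ∈ R, w ∈ (NFA.mk δ₂ ∅ F₂).acceptsFrom {r}}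

@[simp]
theorem mem_genSeqComplFrom {q : σ₁} {R : Set τ} {w : List α} :
    w ∈ genSeqComplFrom A δ₂ F₂ q R ↔
      w ∉ A.acceptsFrom {Sum.inl q} ∧ ∀ r ∈ R, w ∈ (NFA.mk δ₂ ∅ F₂).acceptsFrom {r} :=
  Iff.rfl

theorem not_mem_rearComponent_accepts_iff
    (hI : ∀ p : σ₂, (NFA.mk δ₂ (I p) F₂).accepts = (rearComponent A {p}).acceptsᶜ)
    (T : Set σ₂) (w : List α) :
    w ∉ (rearComponent A T).accepts ↔
      ∀ p ∈ T, ∃ i ∈ I p, w ∈ (NFA.mk δ₂ ∅ F₂).acceptsFrom {i} := by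
  rw [mem_rearComponent_accepts_iff]
  simp only [not_exists, not_and]
  refine forall₂_congr fun p _ => ?_
  change w ∈ (rearComponent A {p}).acceptsᶜ ↔ _
  rw [← hI p]
  exact (NFA.mk δ₂ (I p) F₂).mem_acceptsFrom_iff_exists

theorem nil_mem_acceptsFrom_genSeqCompl_iff (q : σ₁) (R : Set τ) :
    [] ∈ (genSeqCompl A q₀ d δ₂ F₂ I₀ I).acceptsFrom {(q, R)} ↔
      [] ∈ genSeqComplFrom A δ₂ F₂ q R := by
  simp [genSeqCompl, Set.subset_def]

theorem cons_mem_genSeqComplFrom_of_mem_step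
    (hNoBack : ∀ (p : σ₂) (a : α) (q : σ₁), Sum.inl q ∉ A.step (Sum.inr p) a)
    (hd : ∀ (q : σ₁) (a : α) (r : σ₁), Sum.inl r ∈ A.step (Sum.inl q) a ↔ r = d q a)
    (hI : ∀ p : σ₂, (NFA.mk δ₂ (I p) F₂).accepts = (rearComponent A {p}).acceptsᶜ)
    {q q' : σ₁} {R R' : Set τ} {a : α} {w : List α}
    (hstep : (q', R') ∈ (genSeqCompl A q₀ d δ₂ F₂ I₀ I).step (q, R) a)
    (hw : w ∈ genSeqComplFrom A δ₂ F₂ q' R') :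
    a :: w ∈ genSeqComplFrom A δ₂ F₂ q R := by
  obtain ⟨rfl, f, hf, t, ht, rfl⟩ := hstep
  obtain ⟨hfront, hR'⟩ := hw
  refine ⟨?_, fun r hr => ?_⟩
  · rw [cons_mem_acceptsFrom_inl hNoBack hd, not_or, not_mem_rearComponent_accepts_iff hI]
    exact ⟨hfront, fun p hp => ⟨t p, ht p hp, hR' _ (.inr ⟨p, hp, rfl⟩)⟩⟩
  · rw [NFA.cons_mem_acceptsFrom, NFA.stepSet_singleton, NFA.mem_acceptsFrom_iff_exists]
    exact ⟨f r, hf r hr, hR' _ (.inl ⟨r, hr, rfl⟩)⟩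

theorem exists_mem_step_of_cons_mem_genSeqComplFrom [Nonempty τ]
    (hNoBack : ∀ (p : σ₂) (a : α) (q : σ₁), Sum.inl q ∉ A.step (Sum.inr p) a)
    (hd : ∀ (q : σ₁) (a : α) (r : σ₁), Sum.inl r ∈ A.step (Sum.inl q) a ↔ r = d q a)
    (hI : ∀ p : σ₂, (NFA.mk δ₂ (I p) F₂).accepts = (rearComponent A {p}).acceptsᶜ)
    {q : σ₁} {R : Set τ} {a : α} {w : List α} (hw : a :: w ∈ genSeqComplFrom A δ₂ F₂ q R) :
    ∃ R', (d q a, R') ∈ (genSeqCompl A q₀ d δ₂ F₂ I₀ I).step (q, R) a ∧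
      w ∈ genSeqComplFrom A δ₂ F₂ (d q a) R' := by
  obtain ⟨hfront, hR⟩ := hw
  rw [cons_mem_acceptsFrom_inl hNoBack hd, not_or, not_mem_rearComponent_accepts_iff hI] at hfront
  obtain ⟨hfront, hports⟩ := hfront
  have hsucc : ∀ r ∈ R, ∃ s ∈ δ₂ r a, w ∈ (NFA.mk δ₂ ∅ F₂).acceptsFrom {s} := fun r hr => by
    have hr := hR r hr
    rwa [NFA.cons_mem_acceptsFrom, NFA.stepSet_singleton, NFA.mem_acceptsFrom_iff_exists] at hr
  obtain ⟨f, hf⟩ := Set.exists_forall_mem_of_forall_mem_exists hsucc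
  obtain ⟨t, ht⟩ := Set.exists_forall_mem_of_forall_mem_exists hports
  refine ⟨f '' R ∪ t '' transferTargets A q a,
    ⟨rfl, f, fun r hr => (hf r hr).1, t, fun p hp => (ht p hp).1, rfl⟩, hfront, ?_⟩
  rintro _ (⟨r, hr, rfl⟩ | ⟨p, hp, rfl⟩)
  exacts [(hf r hr).2, (ht p hp).2]

theorem mem_genSeqComplFrom_of_mem_acceptsFrom
    (hNoBack : ∀ (p : σ₂) (a : α) (q : σ₁), Sum.inl q ∉ A.step (Sum.inr p) a)
    (hd : ∀ (q : σ₁) (a : α) (r : σ₁), Sum.inl r ∈ A.step (Sum.inl q) a ↔ r = d q a)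
    (hI : ∀ p : σ₂, (NFA.mk δ₂ (I p) F₂).accepts = (rearComponent A {p}).acceptsᶜ)
    {w : List α} (q : σ₁) (R : Set τ) :
    w ∈ (genSeqCompl A q₀ d δ₂ F₂ I₀ I).acceptsFrom {(q, R)} →
      w ∈ genSeqComplFrom A δ₂ F₂ q R := by
  induction w generalizing q R with
  | nil => exact (nil_mem_acceptsFrom_genSeqCompl_iff q R).1
  | cons a w ih =>
    rw [NFA.cons_mem_acceptsFrom, NFA.stepSet_singleton, NFA.mem_acceptsFrom_iff_exists]
    rintro ⟨⟨q', R'⟩, hstep, hw⟩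
    exact cons_mem_genSeqComplFrom_of_mem_step hNoBack hd hI hstep (ih q' R' hw)

theorem mem_acceptsFrom_of_mem_genSeqComplFrom [Nonempty τ]
    (hNoBack : ∀ (p : σ₂) (a : α) (q : σ₁), Sum.inl q ∉ A.step (Sum.inr p) a)
    (hd : ∀ (q : σ₁) (a : α) (r : σ₁), Sum.inl r ∈ A.step (Sum.inl q) a ↔ r = d q a)
    (hI : ∀ p : σ₂, (NFA.mk δ₂ (I p) F₂).accepts = (rearComponent A {p}).acceptsᶜ)
    {w : List α} (q : σ₁) (R : Set τ) :
    w ∈ genSeqComplFrom A δ₂ F₂ q R →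
      w ∈ (genSeqCompl A q₀ d δ₂ F₂ I₀ I).acceptsFrom {(q, R)} := by
  induction w generalizing q R with
  | nil => exact (nil_mem_acceptsFrom_genSeqCompl_iff q R).2
  | cons a w ih =>
    intro hw
    obtain ⟨R', hstep, hw'⟩ := exists_mem_step_of_cons_mem_genSeqComplFrom hNoBack hd hI hw
    rw [NFA.cons_mem_acceptsFrom, NFA.stepSet_singleton, NFA.mem_acceptsFrom_iff_exists]
    exact ⟨_, hstep, ih _ R' hw'⟩

theorem exists_start_mem_genSeqComplFrom_iff
    (hI₀ : (NFA.mk δ₂ I₀ F₂).accepts = (rearComponent A {p | Sum.inr p ∈ A.start}).acceptsᶜ)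
    (w : List α) :
    (∃ s ∈ (genSeqCompl A q₀ d δ₂ F₂ I₀ I).start, w ∈ genSeqComplFrom A δ₂ F₂ s.1 s.2) ↔
      w ∉ A.acceptsFrom {Sum.inl q₀} ∧ w ∈ (NFA.mk δ₂ I₀ F₂).accepts := by
  by_cases hS : {p : σ₂ | Sum.inr p ∈ A.start} = ∅
  · have hrear : w ∈ (NFA.mk δ₂ I₀ F₂).accepts := by
      rw [hI₀, hS]
      exact fun h => by simpa using mem_rearComponent_accepts_iff.1 h
    simp [genSeqCompl, hS, hrear]
  · rw [NFA.accepts_eq_acceptsFrom_start, (NFA.mk δ₂ I₀ F₂).mem_acceptsFrom_iff_exists]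
    simp only [genSeqCompl, hS, false_and, false_or, ne_eq, not_false_eq_true, true_and,
      mem_genSeqComplFrom]
    exact ⟨fun ⟨_, ⟨r, hr, rfl⟩, hfront, hr'⟩ => ⟨hfront, r, hr, hr' r rfl⟩,
      fun ⟨hfront, r, hr, hr'⟩ => ⟨_, ⟨r, hr, rfl⟩, hfront, fun _ h => h ▸ hr'⟩⟩

end Construction
theorem genSeqCompl_accepts_general {α σ₁ σ₂ τ : Type*}
    (A : NFA α (σ₁ ⊕ σ₂))
    (hNoBack : ∀ (p : σ₂) (a : α) (q : σ₁), Sum.inl q ∉ A.step (Sum.inr p) a)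
    (q₀ : σ₁) (hq₀ : ∀ q : σ₁, Sum.inl q ∈ A.start ↔ q = q₀)
    (d : σ₁ → α → σ₁)
    (hd : ∀ (q : σ₁) (a : α) (r : σ₁), Sum.inl r ∈ A.step (Sum.inl q) a ↔ r = d q a)
    (δ₂ : τ → α → Set τ) (F₂ : Set τ) (I₀ : Set τ) (I : σ₂ → Set τ)
    (hI₀ : (NFA.mk δ₂ I₀ F₂).accepts =
      (rearComponent A {p | Sum.inr p ∈ A.start}).acceptsᶜ)
    (hI : ∀ p : σ₂, (NFA.mk δ₂ (I p) F₂).accepts = (rearComponent A {p}).acceptsᶜ) :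
    (genSeqCompl A q₀ d δ₂ F₂ I₀ I).accepts = A.acceptsᶜ := by
  ext w
  have hA : w ∈ A.acceptsᶜ ↔
      w ∉ A.acceptsFrom {Sum.inl q₀} ∧ w ∈ (NFA.mk δ₂ I₀ F₂).accepts := by
    rw [hI₀, accepts_eq_add hNoBack hq₀]
    exact not_or
  rw [hA, NFA.accepts_eq_acceptsFrom_start, NFA.mem_acceptsFrom_iff_exists]
  constructor
  · rintro ⟨s, hs, hw⟩
    exact (exists_start_mem_genSeqComplFrom_iff hI₀ w).1
      ⟨s, hs, mem_genSeqComplFrom_of_mem_acceptsFrom hNoBack hd hI s.1 s.2 hw⟩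
  · intro hw
    -- a step of `genSeqCompl` has to choose a token map `t : σ₂ → τ`
    have : Nonempty τ := let ⟨r, _⟩ := hw.2; ⟨r⟩
    obtain ⟨s, hs, hs'⟩ := (exists_start_mem_genSeqComplFrom_iff hI₀ w).2 hw
    exact ⟨s, hs, mem_acceptsFrom_of_mem_genSeqComplFrom hNoBack hd hI s.1 s.2 hs'⟩

/-- Generalized sequential complementation theorem of Appendix B, for a single
slice.  The NFA `A` over states `Q₁ ⊎ Q₂` has no transitions from `Q₂` to
`Q₁`; its front component is a complete DFA with initial state `q₀` and
transition function `d`; the automaton `(τ, δ₂, I₀, F₂)` accepts the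
complement of the rear component started from its own initial states, and
`(τ, δ₂, I p, F₂)` the complement of the rear component started from each
entry port `p`.  Then the constructed NFA `C` accepts `Σ* ∖ L(A)`. -/
theorem genSeqCompl_accepts {α σ₁ σ₂ τ : Type*}
    [Fintype α] [Fintype σ₁] [Fintype σ₂] [Fintype τ]
    (A : NFA α (σ₁ ⊕ σ₂))
    (hNoBack : ∀ (p : σ₂) (a : α) (q : σ₁), Sum.inl q ∉ A.step (Sum.inr p) a)
    (q₀ : σ₁) (hq₀ : ∀ q : σ₁, Sum.inl q ∈ A.start ↔ q = q₀)
    (d : σ₁ → α → σ₁)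
    (hd : ∀ (q : σ₁) (a : α) (r : σ₁), Sum.inl r ∈ A.step (Sum.inl q) a ↔ r = d q a)
    (δ₂ : τ → α → Set τ) (F₂ : Set τ) (I₀ : Set τ) (I : σ₂ → Set τ)
    (hI₀ : (NFA.mk δ₂ I₀ F₂).accepts =
      (rearComponent A {p | Sum.inr p ∈ A.start}).acceptsᶜ)
    (hI : ∀ p : σ₂, (NFA.mk δ₂ (I p) F₂).accepts = (rearComponent A {p}).acceptsᶜ) :
    (genSeqCompl A q₀ d δ₂ F₂ I₀ I).accepts = A.acceptsᶜ :=
  genSeqCompl_accepts_general A hNoBack q₀ hq₀ d hd δ₂ F₂ I₀ I hI₀ hI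
end
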